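/- arXiv:2212.08412 — 6 statements merged into one kernel-verified Lean document; each statement's English description precedes it below -/
import Mathlib

section
/- Let n be a positive integer and let μ ⊆ λ be partitions. If there exists an n-border strip chain of weight (τ₁, τ₂) from μ to λ (with τ₁, τ₂ ≥ 1 positive integers), then there exists a horizontal n-border strip chain of some weight ρ = (ρ₁, …, ρ_s) from μ to λ with ρ₁ + … + ρ_s = τ₁ + τ₂. -/
open MvPolynomial

namespace Pleth

/-- A partition: a weakly decreasing, finitely supported sequence of natural
numbers (0-indexed: `parts i` is the (i+1)-st part). -/
structure Partition where
  parts : ℕ → ℕ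
  antitone : ∀ ⦃i j : ℕ⦄, i ≤ j → parts j ≤ parts i
  finite : (Function.support parts).Finite

namespace Partition

/-- The empty partition. -/
def empty : Partition :=
  ⟨fun _ => 0, fun _ _ _ => le_rfl, by simp [Function.support]⟩

/-- The size `|λ|` of a partition. -/
noncomputable def size (p : Partition) : ℕ := ∑ᶠ i, p.parts i

/-- The length `ℓ(λ)`: the number of nonzero parts. -/
noncomputable def length (p : Partition) : ℕ := (Function.support p.parts).ncard

/-- Containment of partitions: `Sub μ λ` means `μ ⊆ λ`. -/
def Sub (p q : Partition) : Prop := ∀ i, p.parts i ≤ q.parts i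

/-- The cells (boxes) of the Young diagram, 0-indexed: `(i, j)` with `j < λ_{i+1}`. -/
def cells (p : Partition) : Set (ℕ × ℕ) := {c | c.2 < p.parts c.1}

end Partition

/-- The cells of the skew diagram `λ/μ`. -/
def skew (mu lam : Partition) : Set (ℕ × ℕ) := lam.cells \ mu.cells

/-- Two boxes are adjacent if they share an edge. -/
def Adj (a b : ℕ × ℕ) : Prop :=
  (a.1 = b.1 ∧ (a.2 + 1 = b.2 ∨ b.2 + 1 = a.2)) ∨
    (a.2 = b.2 ∧ (a.1 + 1 = b.1 ∨ b.1 + 1 = a.1))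

/-- A set of boxes is connected if any two of its boxes can be joined by a path
of edge-adjacent boxes inside the set. -/
def IsConnectedSet (S : Set (ℕ × ℕ)) : Prop :=
  ∀ a ∈ S, ∀ b ∈ S, Relation.ReflTransGen (fun x y => y ∈ S ∧ Adj x y) a b

/-- `S` contains no 2×2 block of boxes. -/
def No2x2 (S : Set (ℕ × ℕ)) : Prop :=
  ¬ ∃ i j : ℕ, (i, j) ∈ S ∧ (i + 1, j) ∈ S ∧ (i, j + 1) ∈ S ∧ (i + 1, j + 1) ∈ S

/-- `λ/μ` is a border strip of size `d`: `μ ⊆ λ`, it has exactly `d` boxes,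
it is connected, and contains no 2×2 block. -/
def IsBorderStrip (mu lam : Partition) (d : ℕ) : Prop :=
  Partition.Sub mu lam ∧ (skew mu lam).ncard = d ∧
    IsConnectedSet (skew mu lam) ∧ No2x2 (skew mu lam)

/-- The spin of a skew diagram: its number of nonempty rows minus 1. -/
noncomputable def spin (S : Set (ℕ × ℕ)) : ℕ := (Prod.fst '' S).ncard - 1

/-- `b` is the starting box of `S`: the box in its topmost nonempty row and,
within that row, rightmost column. -/
def IsStartBox (S : Set (ℕ × ℕ)) (b : ℕ × ℕ) : Prop :=
  b ∈ S ∧ (∀ c ∈ S, b.1 ≤ c.1) ∧ (∀ c ∈ S, c.1 = b.1 → c.2 ≤ b.2)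

/-- `(λ/μ)↑`: the boxes `(r, c)` of `S` such that `(r-1, c)` is not in `S`. -/
def up (S : Set (ℕ × ℕ)) : Set (ℕ × ℕ) :=
  {b | b ∈ S ∧ ∀ r : ℕ, r + 1 = b.1 → (r, b.2) ∉ S}

/-- `α` is an `n`-border strip chain of weight `τ` from `μ` to `λ`. -/
def IsChain (n : ℕ) (mu lam : Partition) (τ : List ℕ) (α : ℕ → Partition) : Prop :=
  α 0 = mu ∧ α τ.length = lam ∧
    ∀ i : Fin τ.length, IsBorderStrip (α i) (α (i + 1)) (τ.get i * n)

/-- `α` is a horizontal `n`-border strip chain of weight `τ` from `μ` to `λ`: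
the starting box of each strip in the chain lies in `(λ/μ)↑`. -/
def IsHorizontalChain (n : ℕ) (mu lam : Partition) (τ : List ℕ) (α : ℕ → Partition) : Prop :=
  IsChain n mu lam τ α ∧
    ∀ i : Fin τ.length, ∃ b, IsStartBox (skew (α i) (α (i + 1))) b ∧ b ∈ up (skew mu lam)

/-- `λ/μ` is an `n`-border strip of weight `k`. -/
def IsWeightStrip (n k : ℕ) (mu lam : Partition) : Prop :=
  ∃ (τ : List ℕ) (α : ℕ → Partition),
    (∀ t ∈ τ, 0 < t) ∧ τ.sum = k ∧ IsChain n mu lam τ α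

/-- `λ/μ` is a horizontal `n`-border strip of weight `k`: there is a horizontal
`n`-border strip chain of weight `(1, …, 1)` (`k` ones) from `μ` to `λ`. -/
def IsHorizontalWeightStrip (n k : ℕ) (mu lam : Partition) : Prop :=
  ∃ α : ℕ → Partition, IsHorizontalChain n mu lam (List.replicate k 1) α

/-- The sign of a chain of length `k`: the product of the signs
`(-1)^{spin}` of its strips. -/
noncomputable def chainSign (α : ℕ → Partition) (k : ℕ) : ℤ :=
  ∏ i ∈ Finset.range k, (-1 : ℤ) ^ spin (skew (α i) (α (i + 1)))

open scoped Classical in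
/-- The matrix `M(λ/μ)` (of size `l × l`, with `μ` padded by zero parts):
entry `(i,j)` is `1` if `λ_i - i ≥ μ_j - j` and `n ∣ (λ_i - i) - (μ_j - j)`,
and `0` otherwise. -/
noncomputable def Mmat (n : ℕ) (mu lam : Partition) (l : ℕ) : Matrix (Fin l) (Fin l) ℤ :=
  Matrix.of fun i j : Fin l =>
    if ((mu.parts j : ℤ) - (j : ℤ) ≤ (lam.parts i : ℤ) - (i : ℤ) ∧
        (n : ℤ) ∣ ((lam.parts i : ℤ) - (i : ℤ) - ((mu.parts j : ℤ) - (j : ℤ)))) then 1 else 0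

/-- The matrix `A(λ/μ)`: entry `(i,j)` is `λ_i - i - μ_j + j`. -/
def Amat (mu lam : Partition) (l : ℕ) : Matrix (Fin l) (Fin l) ℤ :=
  Matrix.of fun i j : Fin l =>
    (lam.parts i : ℤ) - (i : ℤ) - (mu.parts j : ℤ) + (j : ℤ)

/-- `h_r` for an integer index `r`, with `h_r = 0` for `r < 0`. -/
noncomputable def hInt (N : ℕ) (r : ℤ) : MvPolynomial (Fin N) ℚ :=
  if 0 ≤ r then hsymm (Fin N) ℚ r.toNat else 0

/-- `e_r` for an integer index `r`, with `e_r = 0` for `r < 0`. -/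
noncomputable def eInt (N : ℕ) (r : ℤ) : MvPolynomial (Fin N) ℚ :=
  if 0 ≤ r then esymm (Fin N) ℚ r.toNat else 0

/-- The Schur polynomial of a partition, via the Jacobi–Trudi determinant
`det(h_{λ_i - i + j})_{i,j=1}^{ℓ(λ)}`. -/
noncomputable def schur (N : ℕ) (p : Partition) : MvPolynomial (Fin N) ℚ :=
  Matrix.det (Matrix.of fun i j : Fin p.length =>
    hInt N ((p.parts i : ℤ) - (i : ℤ) + (j : ℤ)))

/-- `h_m(x₁ⁿ, …, x_Nⁿ)`, i.e. the plethysm `p_n ∘ h_m`. -/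
noncomputable def hpow (N n m : ℕ) : MvPolynomial (Fin N) ℚ :=
  aeval (fun i : Fin N => (X i : MvPolynomial (Fin N) ℚ) ^ n) (hsymm (Fin N) ℚ m)

/-- `e_k(x₁ⁿ, …, x_Nⁿ)`, i.e. up to sign the plethysm `p_n ∘ e_k`. -/
noncomputable def epow (N n k : ℕ) : MvPolynomial (Fin N) ℚ :=
  aeval (fun i : Fin N => (X i : MvPolynomial (Fin N) ℚ) ^ n) (esymm (Fin N) ℚ k)

/-- `z_λ` for `λ : Nat.Partition m`. -/
def zcoeff {m : ℕ} (P : Nat.Partition m) : ℕ :=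
  ∏ i ∈ P.parts.toFinset, i ^ (P.parts.count i) * (P.parts.count i).factorial

/-- The plethysm `h_n ∘ h_m` in `N` variables: the complete homogeneous
symmetric polynomial `h_n` evaluated at the family of all monomials of total
degree `m` in `x₁, …, x_N`. -/
noncomputable def hcomp (N n m : ℕ) : MvPolynomial (Fin N) ℚ :=
  aeval (fun d : (Finset.Nat.antidiagonalTuple N m : Finset (Fin N → ℕ)) =>
      ∏ i : Fin N, (X i : MvPolynomial (Fin N) ℚ) ^ (d.1 i))
    (hsymm (Finset.Nat.antidiagonalTuple N m : Finset (Fin N → ℕ)) ℚ n)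

/-- The sum, over all chains `∅ = λ⁽⁰⁾ ⊆ λ⁽¹⁾ ⊆ … ⊆ λ⁽ˡ⁾` of partitions such
that `λ⁽ⁱ⁾/λ⁽ⁱ⁻¹⁾` is a horizontal `L_i`-border strip of weight `m` for each
`i`, of `(∏ᵢ det M^{(L_i)}(λ⁽ⁱ⁾/λ⁽ⁱ⁻¹⁾)) · s_{λ⁽ˡ⁾}`. -/
noncomputable def chainExpansion (N m : ℕ) (L : List ℕ) : MvPolynomial (Fin N) ℚ :=
  ∑ᶠ c : {c : Fin (L.length + 1) → Partition //
      c 0 = Partition.empty ∧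
      ∀ i : Fin L.length, IsHorizontalWeightStrip (L.get i) m (c i.castSucc) (c i.succ)},
    ((∏ i : Fin L.length,
        Matrix.det (Mmat (L.get i) (c.1 i.castSucc) (c.1 i.succ) (c.1 i.succ).length) : ℤ) :
      MvPolynomial (Fin N) ℚ) * schur N (c.1 (Fin.last L.length))

end Pleth


namespace Aux

open Pleth

/-! ### Beta sequences -/

def beta (p : Partition) (i : ℕ) : ℤ := (p.parts i : ℤ) - i

lemma beta_strictAnti (p : Partition) : StrictAnti (beta p) := by
  apply strictAnti_nat_of_succ_lt
  intro i
  have h := p.antitone (Nat.le_succ i)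
  simp only [Nat.succ_eq_add_one] at h
  simp only [beta]
  push_cast
  omega

lemma beta_injective (p : Partition) : Function.Injective (beta p) :=
  (beta_strictAnti p).injective

lemma exists_parts_bound (p : Partition) : ∃ N, ∀ i, N ≤ i → p.parts i = 0 := by
  obtain ⟨N, hN⟩ := p.finite.bddAbove
  refine ⟨N + 1, fun i hi => ?_⟩
  by_contra h
  have := hN (show i ∈ Function.support p.parts from h)
  omega

lemma exists_beta_le (p : Partition) (w : ℤ) : ∃ i, beta p i ≤ w := by
  obtain ⟨N, hN⟩ := exists_parts_bound p
  refine ⟨N + (-w).natAbs, ?_⟩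
  have h0 : p.parts (N + (-w).natAbs) = 0 := hN _ (by omega)
  simp only [beta, h0, Nat.cast_zero, zero_sub]
  omega

noncomputable def cnt (p : Partition) (w : ℤ) : ℕ := Nat.find (exists_beta_le p w)

lemma lt_cnt_iff (p : Partition) (w : ℤ) (i : ℕ) : i < cnt p w ↔ w < beta p i := by
  constructor
  · intro h
    have := Nat.find_min (exists_beta_le p w) h
    omega
  · intro h
    by_contra h'
    have h1 : beta p i ≤ beta p (cnt p w) := (beta_strictAnti p).antitone (by omega)
    have h2 := Nat.find_spec (exists_beta_le p w)
    simp only [cnt] at h1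
    omega

lemma partition_ext {p q : Partition} (h : p.parts = q.parts) : p = q := by
  cases p; cases q; simp_all

lemma partition_eq_of_beta_eq {p q : Partition} (h : ∀ i, beta p i = beta q i) : p = q := by
  apply partition_ext
  funext i
  have := h i
  simp only [beta] at this
  omega

lemma strictAnti_eq_of_range_eq {f g : ℕ → ℤ} (hf : StrictAnti f) (hg : StrictAnti g)
    (h : Set.range f = Set.range g) : f = g := by
  funext n
  induction n using Nat.strong_induction_on with
  | _ n ih =>
    have h1 : ∃ m, g m = f n := by
      rw [← Set.mem_range, ← h]; exact Set.mem_range_self n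
    have h2 : ∃ m, f m = g n := by
      rw [← Set.mem_range, h]; exact Set.mem_range_self n
    obtain ⟨m1, hm1⟩ := h1
    obtain ⟨m2, hm2⟩ := h2
    have hn1 : n ≤ m1 := by
      by_contra hc
      push_neg at hc
      have h3 := ih m1 hc
      have : m1 = n := hf.injective (by rw [h3, hm1])
      omega
    have hn2 : n ≤ m2 := by
      by_contra hc
      push_neg at hc
      have h3 := ih m2 hc
      have : m2 = n := hg.injective (by rw [← h3, hm2])
      omega
    have e1 := hg.antitone hn1
    have e2 := hf.antitone hn2
    omega

/-! ### The shape of a single bead move -/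

def Shape (f g : ℕ → ℤ) (r s : ℕ) (d : ℕ) : Prop :=
  r ≤ s ∧ g r = f s + d ∧ (∀ i, i < r → g i = f i) ∧
    (∀ i, r < i → i ≤ s → g i = f (i - 1)) ∧ (∀ i, s < i → g i = f i)

section ShapeFacts

variable {σ Λ : Partition} {r s d : ℕ}

lemma shape_out (h : Shape (beta σ) (beta Λ) r s d) :
    ∀ i, i < r ∨ s < i → Λ.parts i = σ.parts i := by
  intro i hi
  have : beta Λ i = beta σ i := by
    rcases hi with hi | hi
    · exact h.2.2.1 i hi
    · exact h.2.2.2.2 i hi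
  simp only [beta] at this
  omega

lemma shape_mid (h : Shape (beta σ) (beta Λ) r s d) :
    ∀ i, r < i → i ≤ s → Λ.parts i = σ.parts (i - 1) + 1 := by
  intro i h1 h2
  have e := h.2.2.2.1 i h1 h2
  simp only [beta] at e
  omega

lemma shape_beta_lt (h : Shape (beta σ) (beta Λ) r s d) (hd : 0 < d) :
    ∀ i, r ≤ i → i ≤ s → beta σ i < beta Λ i := by
  intro i h1 h2
  rcases h1.lt_or_eq with hlt | heq
  · have e := h.2.2.2.1 i hlt h2
    have hs := beta_strictAnti σ (show i - 1 < i by omega)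
    omega
  · subst heq
    rcases h2.lt_or_eq with hlt2 | heq2
    · have e := h.2.2.2.1 (r + 1) (by omega) (by omega)
      have := beta_strictAnti Λ (show r < r + 1 by omega)
      simp only [Nat.add_sub_cancel] at e
      omega
    · subst heq2
      have e := h.2.1
      omega

lemma shape_strip_lt (h : Shape (beta σ) (beta Λ) r s d) (hd : 0 < d) :
    ∀ i, r ≤ i → i ≤ s → σ.parts i < Λ.parts i := by
  intro i h1 h2
  have := shape_beta_lt h hd i h1 h2
  simp only [beta] at this
  omega

lemma shape_sub (h : Shape (beta σ) (beta Λ) r s d) (hd : 0 < d) : σ.Sub Λ := by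
  intro i
  by_cases hi : r ≤ i ∧ i ≤ s
  · exact le_of_lt (shape_strip_lt h hd i hi.1 hi.2)
  · rw [shape_out h i (by omega)]

lemma shape_skew_mem (h : Shape (beta σ) (beta Λ) r s d) (c : ℕ × ℕ) :
    c ∈ skew σ Λ ↔ r ≤ c.1 ∧ c.1 ≤ s ∧ σ.parts c.1 ≤ c.2 ∧ c.2 < Λ.parts c.1 := by
  simp only [skew, Partition.cells, Set.mem_diff, Set.mem_setOf_eq, not_lt]
  constructor
  · rintro ⟨h1, h2⟩
    have : r ≤ c.1 ∧ c.1 ≤ s := by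
      by_contra hc
      rw [shape_out h c.1 (by omega)] at h1
      omega
    exact ⟨this.1, this.2, h2, h1⟩
  · rintro ⟨_, _, h3, h4⟩
    exact ⟨h4, h3⟩

end ShapeFacts

lemma telescope {f g : ℕ → ℤ} {r s : ℕ} (hrs : r ≤ s)
    (hmid : ∀ i, r ≤ i → i < s → f i = g (i + 1)) :
    ∑ i ∈ Finset.Icc r s, (g i - f i) = g r - f s := by
  induction s, hrs using Nat.le_induction with
  | base => simp
  | succ s hrs ih =>
    rw [Finset.sum_Icc_succ_top (by omega)]
    rw [ih (fun i h1 h2 => hmid i h1 (by omega))]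
    have := hmid s hrs (by omega)
    linarith

lemma skew_eq_finset {σ Λ : Partition} {r s : ℕ}
    (hout : ∀ i, i < r ∨ s < i → Λ.parts i = σ.parts i) :
    skew σ Λ = (((Finset.Icc r s).biUnion
      (fun i => {i} ×ˢ Finset.Ico (σ.parts i) (Λ.parts i))) : Finset (ℕ × ℕ)) := by
  ext ⟨i, j⟩
  simp only [skew, Partition.cells, Set.mem_diff, Set.mem_setOf_eq, not_lt, Finset.coe_biUnion,
    Set.mem_iUnion, Finset.mem_coe, Finset.mem_Icc, Finset.mem_product, Finset.mem_singleton,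
    Finset.mem_Ico]
  constructor
  · rintro ⟨h1, h2⟩
    have hi : r ≤ i ∧ i ≤ s := by
      by_contra hc
      rw [hout i (by omega)] at h1
      omega
    exact ⟨i, hi, rfl, h2, h1⟩
  · rintro ⟨i', ⟨_, _⟩, rfl, h3, h4⟩
    exact ⟨h4, h3⟩

lemma skew_ncard_eq {σ Λ : Partition} {r s : ℕ}
    (hout : ∀ i, i < r ∨ s < i → Λ.parts i = σ.parts i) :
    (skew σ Λ).ncard = ∑ i ∈ Finset.Icc r s, (Λ.parts i - σ.parts i) := by
  rw [skew_eq_finset hout, Set.ncard_coe_finset, Finset.card_biUnion]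
  · apply Finset.sum_congr rfl
    intro i _
    rw [Finset.card_product]
    simp
  · intro i _ j _ hij
    simp only [Finset.disjoint_left]
    rintro ⟨a, b⟩ ha hb
    simp only [Finset.mem_product, Finset.mem_singleton] at ha hb
    exact hij (ha.1 ▸ hb.1 ▸ rfl)


abbrev Rrel (S : Set (ℕ × ℕ)) : ℕ × ℕ → ℕ × ℕ → Prop := fun x y => y ∈ S ∧ Adj x y

lemma rtg_row {S : Set (ℕ × ℕ)} {i a b : ℕ} (hab : a ≤ b)
    (hmem : ∀ t, a ≤ t → t ≤ b → (i, t) ∈ S) :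
    Relation.ReflTransGen (Rrel S) (i, a) (i, b) ∧
      Relation.ReflTransGen (Rrel S) (i, b) (i, a) := by
  induction b, hab using Nat.le_induction with
  | base => exact ⟨.refl, .refl⟩
  | succ b hab ih =>
    obtain ⟨ih1, ih2⟩ := ih (fun t h1 h2 => hmem t h1 (by omega))
    constructor
    · exact ih1.tail ⟨hmem (b + 1) (by omega) le_rfl, Or.inl ⟨rfl, Or.inl rfl⟩⟩
    · exact Relation.ReflTransGen.head ⟨hmem b (by omega) (by omega), Or.inl ⟨rfl, Or.inr rfl⟩⟩ ih2

section S1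

variable {σ Λ : Partition} {r s d : ℕ}

lemma shape_row_mem (h : Shape (beta σ) (beta Λ) r s d) {i j : ℕ} (h1 : r ≤ i) (h2 : i ≤ s)
    (h3 : σ.parts i ≤ j) (h4 : j < Λ.parts i) : (i, j) ∈ skew σ Λ := by
  rw [shape_skew_mem h]
  exact ⟨h1, h2, h3, h4⟩

lemma shape_connected (h : Shape (beta σ) (beta Λ) r s d) (hd : 0 < d) :
    IsConnectedSet (skew σ Λ) := by
  have hlt := shape_strip_lt h hd
  have hmid := shape_mid h
  -- canonical box
  have hΛr : 0 < Λ.parts r := lt_of_le_of_lt (Nat.zero_le _) (hlt r le_rfl h.1)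
  have hcanon : (r, Λ.parts r - 1) ∈ skew σ Λ :=
    shape_row_mem h le_rfl h.1 (by have := hlt r le_rfl h.1; omega) (by omega)
  have key : ∀ i, r ≤ i → i ≤ s → ∀ j, σ.parts i ≤ j → j < Λ.parts i →
      Relation.ReflTransGen (Rrel (skew σ Λ)) (i, j) (r, Λ.parts r - 1) ∧
      Relation.ReflTransGen (Rrel (skew σ Λ)) (r, Λ.parts r - 1) (i, j) := by
    intro i hri
    induction i, hri using Nat.le_induction with
    | base =>
      intro _ j hj1 hj2
      have hrow := rtg_row (show j ≤ Λ.parts r - 1 by omega)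
        (fun t ht1 ht2 => shape_row_mem h le_rfl h.1 (by omega) (by omega))
      exact ⟨hrow.1, hrow.2⟩
    | succ i hri ih =>
      intro his j hj1 hj2
      have his' : i ≤ s := by omega
      have hmid' : Λ.parts (i + 1) = σ.parts i + 1 := by
        have := hmid (i + 1) (by omega) his
        simpa using this
      -- row i+1 spans [σ.parts (i+1), σ.parts i]
      have hsig : σ.parts (i + 1) ≤ σ.parts i := σ.antitone (by omega)
      have hrow := rtg_row (show j ≤ σ.parts i by omega)
        (fun t ht1 ht2 => shape_row_mem h (by omega) his (by omega) (by omega))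
      have hrow' := rtg_row (show σ.parts (i+1) ≤ σ.parts i by omega)
        (fun t ht1 ht2 => shape_row_mem h (by omega) his (by omega) (by omega))
      -- vertical step between (i+1, σ.parts i) and (i, σ.parts i)
      have hup : (i, σ.parts i) ∈ skew σ Λ :=
        shape_row_mem h hri his' le_rfl (hlt i hri his')
      have hdown : (i + 1, σ.parts i) ∈ skew σ Λ :=
        shape_row_mem h (by omega) his (by omega) (by omega)
      have ihh := ih his' (σ.parts i) le_rfl (hlt i hri his')
      constructor
      · -- (i+1, j) → (i+1, σ.parts i) → (i, σ.parts i) → canon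
        refine Relation.ReflTransGen.trans ?_ ihh.1
        refine hrow.1.tail ⟨hup, Or.inr ⟨rfl, Or.inr rfl⟩⟩
      · refine Relation.ReflTransGen.trans ihh.2 ?_
        exact Relation.ReflTransGen.head ⟨hdown, Or.inr ⟨rfl, Or.inl rfl⟩⟩ hrow.2
  intro a ha b hb
  rw [shape_skew_mem h] at ha hb
  have ka := key a.1 ha.1 ha.2.1 a.2 ha.2.2.1 ha.2.2.2
  have kb := key b.1 hb.1 hb.2.1 b.2 hb.2.2.1 hb.2.2.2
  exact ka.1.trans kb.2

lemma shape_no2x2 (h : Shape (beta σ) (beta Λ) r s d) : No2x2 (skew σ Λ) := by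
  rintro ⟨i, j, h1, h2, h3, h4⟩
  rw [shape_skew_mem h] at h1 h2 h3 h4
  simp only at h1 h2 h3 h4
  have hmid := shape_mid h (i + 1) (by omega) (by omega)
  simp only [Nat.add_sub_cancel] at hmid
  omega

lemma shape_ncard (h : Shape (beta σ) (beta Λ) r s d) (hd : 0 < d) :
    (skew σ Λ).ncard = d := by
  have hsub := shape_sub h hd
  rw [skew_ncard_eq (shape_out h)]
  have ht : ∑ i ∈ Finset.Icc r s, (beta Λ i - beta σ i) = beta Λ r - beta σ s :=
    telescope h.1 (fun i h1 h2 => (h.2.2.2.1 (i + 1) (by omega) (by omega)).symm.trans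
      (by simp))
  have h2 : ∑ i ∈ Finset.Icc r s, (beta Λ i - beta σ i)
      = ((∑ i ∈ Finset.Icc r s, (Λ.parts i - σ.parts i) : ℕ) : ℤ) := by
    rw [Nat.cast_sum]
    apply Finset.sum_congr rfl
    intro i _
    have := hsub i
    simp only [beta]
    omega
  rw [h.2.1] at ht
  rw [h2] at ht
  omega

lemma shape_isBorderStrip (h : Shape (beta σ) (beta Λ) r s d) (hd : 0 < d) :
    IsBorderStrip σ Λ d :=
  ⟨shape_sub h hd, shape_ncard h hd, shape_connected h hd, shape_no2x2 h⟩

end S1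


section S2

lemma skew_finite (σ Λ : Partition) : (skew σ Λ).Finite := by
  obtain ⟨N, hN⟩ := exists_parts_bound Λ
  apply Set.Finite.subset ((Set.finite_Iio N).prod (Set.finite_Iio (Λ.parts 0)))
  rintro ⟨i, j⟩ ⟨h1, _⟩
  simp only [Partition.cells, Set.mem_setOf_eq] at h1
  constructor
  · simp only [Set.mem_Iio]
    by_contra hc
    rw [hN i (by omega)] at h1
    omega
  · simp only [Set.mem_Iio]
    exact lt_of_lt_of_le h1 (Λ.antitone (Nat.zero_le i))

lemma rtg_mem {S : Set (ℕ × ℕ)} {a b : ℕ × ℕ} (h : Relation.ReflTransGen (Rrel S) a b)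
    (ha : a ∈ S) : b ∈ S := by
  induction h with
  | refl => exact ha
  | tail _ h2 _ => exact h2.1

lemma rtg_crossing {S : Set (ℕ × ℕ)} {a b : ℕ × ℕ} (h : Relation.ReflTransGen (Rrel S) a b)
    (ha : a ∈ S) : ∀ i, a.1 ≤ i → i < b.1 → ∃ j, (i, j) ∈ S ∧ (i + 1, j) ∈ S := by
  induction h with
  | refl => intro i h1 h2; omega
  | tail hab hbc ih =>
    rename_i b c
    intro i h1 h2
    by_cases hib : i < b.1
    · exact ih i h1 hib
    · obtain ⟨hcS, hadj⟩ := hbc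
      have hbS : b ∈ S := rtg_mem hab ha
      rcases hadj with ⟨he, _⟩ | ⟨he, h4 | h4⟩
      · omega
      · have hieq : i = b.1 := by omega
        refine ⟨b.2, ?_, ?_⟩
        · have hb : (i, b.2) = b := by rw [hieq]
          rwa [hb]
        · have hc : (i + 1, b.2) = c := by
            rw [Prod.ext_iff]; exact ⟨by omega, he⟩
          rwa [hc]
      · omega

lemma isBorderStrip_shape {σ Λ : Partition} {d : ℕ} (hbs : IsBorderStrip σ Λ d) (hd : 0 < d) :
    ∃ r s, Shape (beta σ) (beta Λ) r s d := by
  obtain ⟨hsub, hcard, hconn, h2x2⟩ := hbs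
  have hfin : (skew σ Λ).Finite := skew_finite σ Λ
  have hne : (skew σ Λ).Nonempty := by
    rw [Set.nonempty_iff_ne_empty]
    intro he
    rw [he, Set.ncard_empty] at hcard
    omega
  classical
  set F := hfin.toFinset with hF
  set R := F.image Prod.fst with hR
  have hRne : R.Nonempty := by
    rw [hR, Finset.image_nonempty, hF]
    rwa [Set.Finite.toFinset_nonempty]
  set r := R.min' hRne with hr
  set s := R.max' hRne with hs
  have hmemR : ∀ i, i ∈ R ↔ ∃ j, (i, j) ∈ skew σ Λ := by
    intro i
    simp only [hR, Finset.mem_image, hF, Set.Finite.mem_toFinset]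
    constructor
    · rintro ⟨⟨a, b⟩, hab, rfl⟩; exact ⟨b, hab⟩
    · rintro ⟨j, hj⟩; exact ⟨(i, j), hj, rfl⟩
  have hrs : r ≤ s := R.min'_le _ (R.max'_mem hRne)
  obtain ⟨jr, hjr⟩ := (hmemR r).1 (R.min'_mem hRne)
  obtain ⟨js, hjs⟩ := (hmemR s).1 (R.max'_mem hRne)
  have hrowbound : ∀ c ∈ skew σ Λ, r ≤ c.1 ∧ c.1 ≤ s := by
    intro c hc
    have hcR : c.1 ∈ R := (hmemR c.1).2 ⟨c.2, hc⟩
    exact ⟨R.min'_le _ hcR, R.le_max' _ hcR⟩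
  have hmemS : ∀ i j, (i, j) ∈ skew σ Λ ↔ (σ.parts i ≤ j ∧ j < Λ.parts i) := by
    intro i j
    simp only [skew, Partition.cells, Set.mem_diff, Set.mem_setOf_eq, not_lt]
    tauto
  have hcross : ∀ i, r ≤ i → i < s → ∃ j, (i, j) ∈ skew σ Λ ∧ (i + 1, j) ∈ skew σ Λ :=
    fun i h1 h2 => rtg_crossing (hconn _ hjr _ hjs) hjr i h1 h2
  have hmid : ∀ i, r ≤ i → i < s → σ.parts i + 1 = Λ.parts (i + 1) := by
    intro i h1 h2
    obtain ⟨j, hj1, hj2⟩ := hcross i h1 h2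
    rw [hmemS] at hj1 hj2
    have hle : σ.parts i + 1 ≤ Λ.parts (i + 1) := by omega
    by_contra hc
    apply h2x2
    have hΛa : Λ.parts (i + 1) ≤ Λ.parts i := Λ.antitone (by omega)
    have hσa : σ.parts (i + 1) ≤ σ.parts i := σ.antitone (by omega)
    refine ⟨i, σ.parts i, ?_, ?_, ?_, ?_⟩ <;> rw [hmemS] <;> omega
  have hout : ∀ i, i < r ∨ s < i → Λ.parts i = σ.parts i := by
    intro i hi
    have hemp : ¬ ∃ j, (i, j) ∈ skew σ Λ := by
      rintro ⟨j, hj⟩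
      have := hrowbound _ hj
      simp only at this
      omega
    have hsubi := hsub i
    rcases Nat.lt_or_ge (σ.parts i) (Λ.parts i) with hlt | hge
    · exact absurd ⟨σ.parts i, (hmemS _ _).2 ⟨le_rfl, hlt⟩⟩ hemp
    · omega
  have hsum : (skew σ Λ).ncard = ∑ i ∈ Finset.Icc r s, (Λ.parts i - σ.parts i) :=
    skew_ncard_eq hout
  have ht : ∑ i ∈ Finset.Icc r s, (beta Λ i - beta σ i) = beta Λ r - beta σ s :=
    telescope hrs (fun i h1 h2 => by
      have := hmid i h1 h2
      simp only [beta]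
      push_cast
      omega)
  have h2' : ∑ i ∈ Finset.Icc r s, (beta Λ i - beta σ i)
      = ((∑ i ∈ Finset.Icc r s, (Λ.parts i - σ.parts i) : ℕ) : ℤ) := by
    rw [Nat.cast_sum]
    exact Finset.sum_congr rfl (fun i _ => by have := hsub i; simp only [beta]; omega)
  rw [h2', ← hsum, hcard] at ht
  refine ⟨r, s, hrs, by omega, ?_, ?_, ?_⟩
  · intro i hi
    have := hout i (Or.inl hi)
    simp only [beta]
    omega
  · intro i h1 h2
    have := hmid (i - 1) (by omega) (by omega)
    simp only [beta]
    have hi : i - 1 + 1 = i := by omega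
    rw [hi] at this
    omega
  · intro i hi
    have := hout i (Or.inr hi)
    simp only [beta]
    omega

end S2


section Moves

lemma shape_fr_lt_gr {f g : ℕ → ℤ} {r s d : ℕ} (h : Shape f g r s d)
    (hg : StrictAnti g) (hd : 0 < d) : f r < g r := by
  rcases h.1.lt_or_eq with hlt | heq
  · have e := h.2.2.2.1 (r + 1) (by omega) (by omega)
    have := hg (show r < r + 1 by omega)
    simp only [Nat.add_sub_cancel] at e
    omega
  · rw [← heq] at h
    have := h.2.1
    omega

lemma shape_target_notMem {f g : ℕ → ℤ} {r s d : ℕ} (h : Shape f g r s d)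
    (hf : StrictAnti f) (hg : StrictAnti g) (hd : 0 < d) :
    f s + d ∉ Set.range f := by
  rintro ⟨i, hi⟩
  have hfr := shape_fr_lt_gr h hg hd
  have hrs := h.1
  rcases Nat.lt_or_ge i r with hir | hir
  · have e := h.2.2.1 i hir
    have : g i = g r := by rw [e, hi, h.2.1]
    have := hg.injective this
    omega
  · have : f i ≤ f r := hf.antitone hir
    have := h.2.1
    omega

lemma shape_src_notMem {f g : ℕ → ℤ} {r s d : ℕ} (h : Shape f g r s d)
    (hf : StrictAnti f) (hg : StrictAnti g) (hd : 0 < d) :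
    f s ∉ Set.range g := by
  rintro ⟨i, hi⟩
  have hrs := h.1
  rcases Nat.lt_or_ge i r with hir | hir
  · have e := h.2.2.1 i hir
    have : i = s := hf.injective (by rw [← e, hi])
    omega
  · rcases Nat.lt_or_ge s i with hsi | hsi
    · have e := h.2.2.2.2 i hsi
      have : i = s := hf.injective (by rw [← e, hi])
      omega
    · rcases hir.lt_or_eq with hlt | heq
      · have e := h.2.2.2.1 i hlt hsi
        have : i - 1 = s := hf.injective (by rw [← e, hi])
        omega
      · rw [← heq] at hi
        have := h.2.1
        omega

lemma shape_range {f g : ℕ → ℤ} {r s d : ℕ} (h : Shape f g r s d)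
    (hf : StrictAnti f) : Set.range g = (Set.range f \ {f s}) ∪ {f s + d} := by
  have hrs := h.1
  ext z
  simp only [Set.mem_union, Set.mem_diff, Set.mem_singleton_iff, Set.mem_range]
  constructor
  · rintro ⟨i, rfl⟩
    rcases Nat.lt_or_ge i r with hir | hir
    · left
      refine ⟨⟨i, (h.2.2.1 i hir).symm⟩, ?_⟩
      rw [h.2.2.1 i hir]
      intro hc
      have : i = s := hf.injective hc
      omega
    · rcases hir.lt_or_eq with hlt | heq
      · rcases Nat.lt_or_ge s i with hsi | hsi
        · left
          refine ⟨⟨i, (h.2.2.2.2 i hsi).symm⟩, ?_⟩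
          rw [h.2.2.2.2 i hsi]
          intro hc
          have : i = s := hf.injective hc
          omega
        · left
          refine ⟨⟨i - 1, (h.2.2.2.1 i hlt hsi).symm⟩, ?_⟩
          rw [h.2.2.2.1 i hlt hsi]
          intro hc
          have : i - 1 = s := hf.injective hc
          omega
      · right
        rw [← heq, h.2.1]
  · rintro (⟨⟨i, rfl⟩, hne⟩ | rfl)
    · have his : i ≠ s := fun hc => hne (by rw [hc])
      rcases Nat.lt_or_ge i r with hir | hir
      · exact ⟨i, h.2.2.1 i hir⟩
      · rcases Nat.lt_or_ge s i with hsi | hsi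
        · exact ⟨i, h.2.2.2.2 i hsi⟩
        · refine ⟨i + 1, ?_⟩
          rw [h.2.2.2.1 (i + 1) (by omega) (by omega)]
          simp
    · exact ⟨r, h.2.1⟩

lemma exists_shape_of_move (μ : Partition) {y : ℤ} {d : ℕ} (hd : 0 < d)
    (hy : y ∈ Set.range (beta μ)) (hy' : y + d ∉ Set.range (beta μ)) :
    ∃ (ν : Partition) (r s : ℕ), Shape (beta μ) (beta ν) r s d ∧ beta μ s = y := by
  obtain ⟨s, hs⟩ := hy
  set w : ℤ := y + d with hw
  set r := cnt μ w with hr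
  have hiff : ∀ i, i < r ↔ w < beta μ i := fun i => lt_cnt_iff μ w i
  have hrs : r ≤ s := by
    by_contra hc
    have h1 := (hiff s).1 (by omega)
    omega
  have hbr : beta μ r < w := by
    have h1 : ¬ w < beta μ r := fun hc => absurd ((hiff r).2 hc) (by omega)
    rcases lt_or_eq_of_le (not_lt.1 h1) with h | h
    · exact h
    · exact absurd ⟨r, h⟩ hy'
  have hprev : ∀ i, i < r → w < beta μ i := fun i hi => (hiff i).1 hi
  have hbmur : beta μ r = (μ.parts r : ℤ) - r := rfl
  have hpos : 0 ≤ w + r := by omega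
  classical
  set P : ℕ → ℕ := fun i =>
    if i < r then μ.parts i else if i = r then (w + r).toNat
    else if i ≤ s then μ.parts (i - 1) + 1 else μ.parts i with hP
  have hPlt : ∀ j, j < r → P j = μ.parts j := fun j hj => by
    simp only [hP]; rw [if_pos hj]
  have hPr : P r = (w + r).toNat := by
    simp only [hP]; rw [if_neg (by omega)]; simp
  have hPmid : ∀ j, r < j → j ≤ s → P j = μ.parts (j - 1) + 1 := fun j h1 h2 => by
    simp only [hP]; rw [if_neg (by omega), if_neg (by omega), if_pos h2]
  have hPgt : ∀ j, s < j → P j = μ.parts j := fun j hj => by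
    simp only [hP]; rw [if_neg (by omega), if_neg (by omega), if_neg (by omega)]
  have hstep : ∀ i, P (i + 1) ≤ P i := by
    intro i
    have a1 : μ.parts (i + 1) ≤ μ.parts i := μ.antitone (by omega)
    have a2 : μ.parts i ≤ μ.parts (i - 1) := μ.antitone (by omega)
    have a3 : μ.parts (i + 1) ≤ μ.parts (i - 1) := μ.antitone (by omega)
    rcases Nat.lt_trichotomy (i + 1) r with h | h | h
    · rw [hPlt _ h, hPlt _ (by omega)]; exact a1
    · rw [h, hPr, hPlt _ (by omega)]
      have hp := hprev i (by omega)
      have hb : beta μ i = (μ.parts i : ℤ) - i := rfl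
      omega
    · have hri : r ≤ i := by omega
      rcases hri.lt_or_eq with hlt | heq
      · rcases Nat.lt_or_ge s i with hsi | hsi
        · rw [hPgt _ hsi, hPgt _ (by omega)]; exact a1
        · rcases hsi.lt_or_eq with hsi' | heq2
          · rw [hPmid _ hlt hsi, hPmid _ (by omega) (by omega)]
            simp only [Nat.add_sub_cancel]
            omega
          · subst heq2
            rw [hPmid _ hlt le_rfl, hPgt _ (by omega)]
            omega
      · rw [← heq, hPr]
        rcases Nat.lt_or_ge s (r + 1) with hsr | hsr
        · rw [hPgt _ (by omega)]
          have : μ.parts (r + 1) ≤ μ.parts r := μ.antitone (by omega)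
          omega
        · rw [hPmid _ (by omega) (by omega)]
          simp only [Nat.add_sub_cancel]
          omega
  have hfin : (Function.support P).Finite := by
    apply Set.Finite.subset (μ.finite.union (Set.finite_Iic s))
    intro i hi
    rcases Nat.lt_or_ge s i with hsi | hsi
    · left
      rw [Function.mem_support] at hi ⊢
      rwa [hPgt _ hsi] at hi
    · right
      simpa using hsi
  refine ⟨⟨P, fun i j hij => antitone_nat_of_succ_le hstep hij, hfin⟩, r, s, ⟨hrs, ?_, ?_, ?_, ?_⟩, hs⟩
  · show (P r : ℤ) - r = beta μ s + d
    rw [hPr, hs]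
    omega
  · intro i hi
    show (P i : ℤ) - i = beta μ i
    rw [hPlt _ hi]
    rfl
  · intro i h1 h2
    show (P i : ℤ) - i = beta μ (i - 1)
    rw [hPmid _ h1 h2]
    have hb : beta μ (i - 1) = (μ.parts (i - 1) : ℤ) - ((i - 1 : ℕ) : ℤ) := rfl
    push_cast
    omega
  · intro i hi
    show (P i : ℤ) - i = beta μ i
    rw [hPgt _ hi]
    rfl

lemma horiz_cond {mu Λ : Partition} {r : ℕ} {w : ℤ}
    (hcnt : ∀ i, w < beta Λ i ↔ i < r)
    (hsub : ∀ z, z ∈ Set.range (beta Λ) → w < z → z ∈ Set.range (beta mu)) :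
    r = 0 ∨ w < beta mu (r - 1) := by
  rcases Nat.eq_zero_or_pos r with h | h
  · exact Or.inl h
  right
  rw [← lt_cnt_iff]
  have hA : (beta Λ) '' (Set.Iio r) ⊆ (beta mu) '' (Set.Iio (cnt mu w)) := by
    rintro z ⟨i, hi, rfl⟩
    simp only [Set.mem_Iio] at hi
    have hz : w < beta Λ i := (hcnt i).2 hi
    obtain ⟨j, hj⟩ := hsub _ ⟨i, rfl⟩ hz
    exact ⟨j, by rw [Set.mem_Iio, lt_cnt_iff, hj]; exact hz, hj⟩
  have hc1 : ((beta Λ) '' (Set.Iio r)).ncard = r := by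
    rw [Set.ncard_image_of_injOn ((beta_injective Λ).injOn)]
    rw [← Finset.coe_Iio, Set.ncard_coe_finset, Nat.card_Iio]
  have hc2 : ((beta mu) '' (Set.Iio (cnt mu w))).ncard = cnt mu w := by
    rw [Set.ncard_image_of_injOn ((beta_injective mu).injOn)]
    rw [← Finset.coe_Iio, Set.ncard_coe_finset, Nat.card_Iio]
  have hfin : ((beta mu) '' (Set.Iio (cnt mu w))).Finite :=
    (Set.finite_Iio _).image _
  have := Set.ncard_le_ncard hA hfin
  omega

lemma exists_start_box {mu σ Λ lam : Partition} {r s d : ℕ}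
    (h : Shape (beta σ) (beta Λ) r s d) (hd : 0 < d)
    (hmusub : mu.Sub σ) (hlamsub : Λ.Sub lam)
    (hcond : r = 0 ∨ beta Λ r < beta mu (r - 1)) :
    ∃ b, IsStartBox (skew σ Λ) b ∧ b ∈ up (skew mu lam) := by
  have hlt := shape_strip_lt h hd r le_rfl h.1
  refine ⟨(r, Λ.parts r - 1), ⟨?_, ?_, ?_⟩, ⟨?_, ?_⟩⟩
  · exact shape_row_mem h le_rfl h.1 (by omega) (by omega)
  · intro c hc; rw [shape_skew_mem h] at hc; exact hc.1
  · intro c hc hc1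
    rw [shape_skew_mem h] at hc
    have h1 := hc.2.2.2
    have hc1' : c.1 = r := hc1
    rw [hc1'] at h1
    show c.2 ≤ Λ.parts r - 1
    omega
  · simp only [skew, Partition.cells, Set.mem_diff, Set.mem_setOf_eq, not_lt]
    have h1 := hlamsub r
    have h2 := hmusub r
    exact ⟨by omega, by omega⟩
  · intro r' hr'
    simp only at hr'
    simp only [skew, Partition.cells, Set.mem_diff, Set.mem_setOf_eq, not_lt, not_and, not_not]
    intro _
    rcases hcond with h0 | hcond
    · omega
    · have hb1 : beta Λ r = (Λ.parts r : ℤ) - r := rfl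
      have hb2 : beta mu (r - 1) = (mu.parts (r - 1) : ℤ) - ((r - 1 : ℕ) : ℤ) := rfl
      have hr1 : r' = r - 1 := by omega
      rw [hr1]
      omega

end Moves


lemma strictAnti_lt_iff {f : ℕ → ℤ} (hf : StrictAnti f) (r i : ℕ) : f r < f i ↔ i < r := by
  constructor
  · intro h
    by_contra hc
    have := hf.antitone (not_lt.1 hc)
    omega
  · exact fun h => hf h

lemma first_strip_cond {σ Λ : Partition} {r s d : ℕ} (h : Shape (beta σ) (beta Λ) r s d) :
    r = 0 ∨ beta Λ r < beta σ (r - 1) := by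
  rcases Nat.eq_zero_or_pos r with h0 | h0
  · exact Or.inl h0
  · right
    rw [← h.2.2.1 (r - 1) (by omega)]
    exact beta_strictAnti Λ (by omega)

lemma chain_one {n : ℕ} {mu lam : Partition} {k : ℕ}
    {r s : ℕ} (h : Shape (beta mu) (beta lam) r s (k * n)) (hd : 0 < k * n) (hk : 0 < k) :
    ∃ (ρ : List ℕ) (β : ℕ → Partition), (∀ t ∈ ρ, 0 < t) ∧ ρ.sum = k ∧
      IsHorizontalChain n mu lam ρ β := by
  have hbs := shape_isBorderStrip h hd
  refine ⟨[k], fun i => if i = 0 then mu else lam, ?_, by simp, ⟨⟨by simp, by simp, ?_⟩, ?_⟩⟩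
  · intro t ht
    simp only [List.mem_singleton] at ht
    omega
  · rintro ⟨i, hi⟩
    have hi0 : i = 0 := by simp at hi; omega
    subst hi0
    exact hbs
  · rintro ⟨i, hi⟩
    have hi0 : i = 0 := by simp at hi; omega
    subst hi0
    exact exists_start_box h hd (fun i => le_rfl) (fun i => le_rfl) (first_strip_cond h)

lemma chain_two {n : ℕ} {mu nu lam : Partition} {p q : ℕ} (hp : 0 < p) (hq : 0 < q)
    (h1 : IsBorderStrip mu nu (p * n)) (h2 : IsBorderStrip nu lam (q * n))
    (hb1 : ∃ b, IsStartBox (skew mu nu) b ∧ b ∈ up (skew mu lam))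
    (hb2 : ∃ b, IsStartBox (skew nu lam) b ∧ b ∈ up (skew mu lam)) :
    ∃ (ρ : List ℕ) (β : ℕ → Partition), (∀ t ∈ ρ, 0 < t) ∧ ρ.sum = p + q ∧
      IsHorizontalChain n mu lam ρ β := by
  refine ⟨[p, q], fun i => if i = 0 then mu else if i = 1 then nu else lam, ?_, by simp,
    ⟨⟨by simp, by simp, ?_⟩, ?_⟩⟩
  · intro t ht
    simp only [List.mem_cons, List.mem_singleton, List.not_mem_nil, or_false] at ht
    rcases ht with rfl | rfl <;> omega
  · rintro ⟨i, hi⟩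
    have hi2 : i < 2 := by simpa using hi
    interval_cases i
    · exact h1
    · exact h2
  · rintro ⟨i, hi⟩
    have hi2 : i < 2 := by simpa using hi
    interval_cases i
    · exact hb1
    · exact hb2

end Aux



open Pleth
/-- Lemma 2.1 (rearrangement, length-2 case): if there is an `n`-border strip
chain of weight `(τ₁, τ₂)` from `μ` to `λ`, then there is a horizontal
`n`-border strip chain of some weight `ρ` from `μ` to `λ` with `|ρ| = τ₁ + τ₂`. -/
theorem rearrangement_two (n : ℕ) (hn : 0 < n) (mu lam : Partition) (hsub : mu.Sub lam)
    (τ₁ τ₂ : ℕ) (hτ₁ : 0 < τ₁) (hτ₂ : 0 < τ₂) (α : ℕ → Partition)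
    (hchain : IsChain n mu lam [τ₁, τ₂] α) :
    ∃ (ρ : List ℕ) (β : ℕ → Partition), (∀ r ∈ ρ, 0 < r) ∧ ρ.sum = τ₁ + τ₂ ∧
      IsHorizontalChain n mu lam ρ β := by
  classical
  open Aux in
  obtain ⟨h0, h2len, hstrip⟩ := hchain
  have h1' := hstrip ⟨0, by norm_num⟩
  have h2' := hstrip ⟨1, by norm_num⟩
  have hs1 : IsBorderStrip mu (α 1) (τ₁ * n) := by rw [← h0]; exact h1'
  have hs2 : IsBorderStrip (α 1) lam (τ₂ * n) := by rw [← h2len]; exact h2'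
  set ν := α 1 with hν
  set a := τ₁ * n with hadef
  set b := τ₂ * n with hbdef
  have hapos : 0 < a := Nat.mul_pos hτ₁ hn
  have hbpos : 0 < b := Nat.mul_pos hτ₂ hn
  obtain ⟨r1, s1, hsh1⟩ := isBorderStrip_shape hs1 hapos
  obtain ⟨r2, s2, hsh2⟩ := isBorderStrip_shape hs2 hbpos
  set x := beta mu s1 with hxdef
  set y := beta ν s2 with hydef
  have hmuSA := beta_strictAnti mu
  have hνSA := beta_strictAnti ν
  have hlamSA := beta_strictAnti lam
  have hx'B : x + (a : ℤ) ∉ Set.range (beta mu) := shape_target_notMem hsh1 hmuSA hνSA hapos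
  have hxν : x ∉ Set.range (beta ν) := shape_src_notMem hsh1 hmuSA hνSA hapos
  have hy'ν : y + (b : ℤ) ∉ Set.range (beta ν) := shape_target_notMem hsh2 hνSA hlamSA hbpos
  have hylam : y ∉ Set.range (beta lam) := shape_src_notMem hsh2 hνSA hlamSA hbpos
  have hrange1 : Set.range (beta ν) = (Set.range (beta mu) \ {x}) ∪ {x + (a : ℤ)} :=
    shape_range hsh1 hmuSA
  have hrange2 : Set.range (beta lam) = (Set.range (beta ν) \ {y}) ∪ {y + (b : ℤ)} :=
    shape_range hsh2 hνSA
  have hxB : x ∈ Set.range (beta mu) := ⟨s1, rfl⟩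
  have hyν : y ∈ Set.range (beta ν) := ⟨s2, rfl⟩
  have hsum_eq : (τ₁ + τ₂) * n = a + b := by rw [hadef, hbdef]; ring
  by_cases hA : y = x + (a : ℤ)
  · -- Case A: the two strips concatenate into a single border strip
    have hnot : x + ((a + b : ℕ) : ℤ) ∉ Set.range (beta mu) := by
      intro hc
      apply hy'ν
      have he : y + (b : ℤ) = x + ((a + b : ℕ) : ℤ) := by push_cast; omega
      rw [he, hrange1]
      simp only [Set.mem_union, Set.mem_diff, Set.mem_singleton_iff]
      left
      refine ⟨hc, ?_⟩
      push_cast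
      omega
    obtain ⟨lt, r, s, hshL, hbet⟩ := exists_shape_of_move mu (by omega : 0 < a + b) hxB hnot
    have hltSA := beta_strictAnti lt
    have hrangeL : Set.range (beta lt) = (Set.range (beta mu) \ {x}) ∪ {x + ((a + b : ℕ) : ℤ)} := by
      have h := shape_range hshL hmuSA
      rwa [hbet] at h
    have hre : Set.range (beta lt) = Set.range (beta lam) := by
      rw [hrangeL, hrange2, hrange1, hA]
      ext z
      simp only [Set.mem_union, Set.mem_diff, Set.mem_singleton_iff]
      constructor
      · rintro (⟨hz1, hz2⟩ | hz3)
        · exact Or.inl ⟨Or.inl ⟨hz1, hz2⟩, fun hc => hx'B (hc ▸ hz1)⟩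
        · right; push_cast at hz3 ⊢; omega
      · rintro (⟨⟨hz1, hz2⟩ | hz3, hz4⟩ | hz5)
        · exact Or.inl ⟨hz1, hz2⟩
        · exact absurd hz3 hz4
        · right; push_cast at hz5 ⊢; omega
    have hlam_eq : lt = lam :=
      partition_eq_of_beta_eq (fun i => by
        rw [strictAnti_eq_of_range_eq hltSA hlamSA hre])
    subst hlam_eq
    have hsh' : Shape (beta mu) (beta lt) r s ((τ₁ + τ₂) * n) := by
      rw [hsum_eq]; exact hshL
    exact chain_one hsh' (by omega) (by omega)
  · by_cases hB : y + (b : ℤ) = x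
    · -- Case B: the strips concatenate the other way round
      have hyB : y ∈ Set.range (beta mu) := by
        rw [hrange1] at hyν
        simp only [Set.mem_union, Set.mem_diff, Set.mem_singleton_iff] at hyν
        rcases hyν with ⟨h1, _⟩ | h3
        · exact h1
        · exact absurd h3 hA
      have hnot : y + ((a + b : ℕ) : ℤ) ∉ Set.range (beta mu) := by
        intro hc
        apply hx'B
        have he : x + (a : ℤ) = y + ((a + b : ℕ) : ℤ) := by push_cast; omega
        rwa [he]
      obtain ⟨lt, r, s, hshL, hbet⟩ := exists_shape_of_move mu (by omega : 0 < a + b) hyB hnot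
      have hltSA := beta_strictAnti lt
      have hrangeL : Set.range (beta lt)
          = (Set.range (beta mu) \ {y}) ∪ {y + ((a + b : ℕ) : ℤ)} := by
        have h := shape_range hshL hmuSA
        rwa [hbet] at h
      have hre : Set.range (beta lt) = Set.range (beta lam) := by
        rw [hrangeL, hrange2, hrange1]
        ext z
        simp only [Set.mem_union, Set.mem_diff, Set.mem_singleton_iff]
        constructor
        · rintro (⟨hz1, hz2⟩ | hz3)
          · by_cases hzx : z = x
            · right; push_cast at hzx ⊢; omega
            · exact Or.inl ⟨Or.inl ⟨hz1, hzx⟩, hz2⟩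
          · refine Or.inl ⟨Or.inr ?_, ?_⟩ <;> push_cast at hz3 ⊢ <;> omega
        · rintro (⟨⟨hz1, hz2⟩ | hz3, hz4⟩ | hz5)
          · exact Or.inl ⟨hz1, hz4⟩
          · right; push_cast at hz3 ⊢; omega
          · left
            have hzx : z = x := by omega
            refine ⟨by rw [hzx]; exact hxB, ?_⟩
            push_cast at hz5 ⊢
            omega
      have hlam_eq : lt = lam :=
        partition_eq_of_beta_eq (fun i => by
          rw [strictAnti_eq_of_range_eq hltSA hlamSA hre])
      subst hlam_eq
      have hsh' : Shape (beta mu) (beta lt) r s ((τ₁ + τ₂) * n) := by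
        rw [hsum_eq]; exact hshL
      exact chain_one hsh' (by omega) (by omega)
    · -- Case C: two independent bead moves
      have hyB : y ∈ Set.range (beta mu) ∧ y ≠ x := by
        rw [hrange1] at hyν
        simp only [Set.mem_union, Set.mem_diff, Set.mem_singleton_iff] at hyν
        rcases hyν with ⟨h1, h2⟩ | h3
        · exact ⟨h1, h2⟩
        · exact absurd h3 hA
      have hy'B : y + (b : ℤ) ∉ Set.range (beta mu) := by
        intro hc
        apply hy'ν
        rw [hrange1]
        simp only [Set.mem_union, Set.mem_diff, Set.mem_singleton_iff]
        exact Or.inl ⟨hc, hB⟩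
      have hx'y' : x + (a : ℤ) ≠ y + (b : ℤ) := by
        intro hc
        apply hy'ν
        rw [← hc, hrange1]
        exact Set.mem_union_right _ (Set.mem_singleton _)
      have hw2 : beta lam r2 = y + (b : ℤ) := hsh2.2.1
      rcases lt_or_gt_of_ne hx'y' with hlt | hgt
      · -- C1: the original chain is already horizontal
        obtain ⟨ρ, β, hρ1, hρ2, hρ3⟩ := chain_two hτ₁ hτ₂
          (show IsBorderStrip mu ν (τ₁ * n) from by rw [← hadef]; exact hs1)
          (show IsBorderStrip ν lam (τ₂ * n) from by rw [← hbdef]; exact hs2)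
          (exists_start_box hsh1 hapos (fun i => le_rfl) hs2.1 (first_strip_cond hsh1))
          (by
            refine exists_start_box hsh2 hbpos hs1.1 (fun i => le_rfl) ?_
            apply horiz_cond (fun i => strictAnti_lt_iff hlamSA r2 i)
            intro z hz hzgt
            rw [hw2] at hzgt
            rw [hrange2] at hz
            simp only [Set.mem_union, Set.mem_diff, Set.mem_singleton_iff] at hz
            rcases hz with ⟨hz1, _⟩ | hz3
            · rw [hrange1] at hz1
              simp only [Set.mem_union, Set.mem_diff, Set.mem_singleton_iff] at hz1
              rcases hz1 with ⟨h1, _⟩ | h3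
              · exact h1
              · exfalso; omega
            · exfalso; omega)
        exact ⟨ρ, β, hρ1, hρ2, hρ3⟩
      · -- C2: swap the two moves
        obtain ⟨ν', r1', s1', hsh1', hbet1⟩ := exists_shape_of_move mu hbpos hyB.1 hy'B
        have hν'SA := beta_strictAnti ν'
        have hrange1' : Set.range (beta ν') = (Set.range (beta mu) \ {y}) ∪ {y + (b : ℤ)} := by
          have h := shape_range hsh1' hmuSA
          rwa [hbet1] at h
        have hxν' : x ∈ Set.range (beta ν') := by
          rw [hrange1']
          simp only [Set.mem_union, Set.mem_diff, Set.mem_singleton_iff]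
          exact Or.inl ⟨hxB, fun hc => hyB.2 hc.symm⟩
        have hx'ν' : x + (a : ℤ) ∉ Set.range (beta ν') := by
          rw [hrange1']
          simp only [Set.mem_union, Set.mem_diff, Set.mem_singleton_iff]
          rintro (⟨hc1, _⟩ | hc2)
          · exact hx'B hc1
          · exact hx'y' hc2
        obtain ⟨lt, r2', s2', hsh2', hbet2⟩ := exists_shape_of_move ν' hapos hxν' hx'ν'
        have hltSA := beta_strictAnti lt
        have hrange2' : Set.range (beta lt) = (Set.range (beta ν') \ {x}) ∪ {x + (a : ℤ)} := by
          have h := shape_range hsh2' hν'SA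
          rwa [hbet2] at h
        have hre : Set.range (beta lt) = Set.range (beta lam) := by
          rw [hrange2', hrange1', hrange2, hrange1]
          ext z
          simp only [Set.mem_union, Set.mem_diff, Set.mem_singleton_iff]
          constructor
          · rintro (⟨⟨hz1, hz2⟩ | hz3, hz4⟩ | hz5)
            · exact Or.inl ⟨Or.inl ⟨hz1, hz4⟩, hz2⟩
            · exact Or.inr hz3
            · refine Or.inl ⟨Or.inr hz5, fun hc => ?_⟩
              rw [hc] at hz5
              rw [hz5] at hyB
              exact hx'B hyB.1
          · rintro (⟨⟨hz1, hz2⟩ | hz3, hz4⟩ | hz5)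
            · exact Or.inl ⟨Or.inl ⟨hz1, hz4⟩, hz2⟩
            · exact Or.inr hz3
            · refine Or.inl ⟨Or.inr hz5, fun hc => hB (by omega)⟩
        have hlam_eq : lt = lam :=
          partition_eq_of_beta_eq (fun i => by
            rw [strictAnti_eq_of_range_eq hltSA hlamSA hre])
        subst hlam_eq
        have hbs1' : IsBorderStrip mu ν' b := shape_isBorderStrip hsh1' hbpos
        have hbs2' : IsBorderStrip ν' lt a := shape_isBorderStrip hsh2' hapos
        have hw2' : beta lt r2' = x + (a : ℤ) := by
          rw [hsh2'.2.1, hbet2]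
        obtain ⟨ρ, β, hρ1, hρ2, hρ3⟩ := chain_two hτ₂ hτ₁
          (show IsBorderStrip mu ν' (τ₂ * n) from by rw [← hbdef]; exact hbs1')
          (show IsBorderStrip ν' lt (τ₁ * n) from by rw [← hadef]; exact hbs2')
          (exists_start_box hsh1' hbpos (fun i => le_rfl) hbs2'.1 (first_strip_cond hsh1'))
          (by
            refine exists_start_box hsh2' hapos hbs1'.1 (fun i => le_rfl) ?_
            apply horiz_cond (fun i => strictAnti_lt_iff hltSA r2' i)
            intro z hz hzgt
            rw [hw2'] at hzgt
            rw [hrange2, hrange1] at hz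
            simp only [Set.mem_union, Set.mem_diff, Set.mem_singleton_iff] at hz
            rcases hz with ⟨⟨h1, _⟩ | h3, _⟩ | hz5
            · exact h1
            · exfalso; omega
            · exfalso; omega)
        exact ⟨ρ, β, hρ1, by omega, hρ3⟩
end

section
/- Let n, k be positive integers and let μ ⊆ λ be partitions such that λ/μ is an n-border strip of weight k. Then λ/μ is a horizontal n-border strip of weight k if and only if the maximum of the lengths l(ρ) over all horizontal n-border strip chains (of any weight ρ) from μ to λ equals k. -/
open MvPolynomial

namespace Pleth

namespace Partition

lemma Sub.trans {p q r : Partition} (hpq : p.Sub q) (hqr : q.Sub r) : p.Sub r :=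
  fun i => (hpq i).trans (hqr i)

lemma cells_mono {p q : Partition} (h : p.Sub q) : p.cells ⊆ q.cells :=
  fun c hc => lt_of_lt_of_le hc (h c.1)

lemma cells_finite (p : Partition) : p.cells.Finite := by
  refine (p.finite.prod (Set.finite_Iio (p.parts 0))).subset ?_
  rintro ⟨i, j⟩ (hj : j < p.parts i)
  exact ⟨Nat.ne_zero_of_lt hj, hj.trans_le (p.antitone (Nat.zero_le i))⟩

end Partition

lemma skew_finite (mu lam : Partition) : (skew mu lam).Finite :=
  lam.cells_finite.sdiff

lemma disjoint_skew_skew (a b c : Partition) : Disjoint (skew a b) (skew b c) :=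
  Set.disjoint_left.mpr fun _ hab hbc => hbc.2 hab.1

lemma skew_union_skew {a b c : Partition} (hab : a.Sub b) (hbc : b.Sub c) :
    skew a b ∪ skew b c = skew a c := by
  rw [Set.union_comm]
  exact Set.sdiff_union_sdiff_cancel (Partition.cells_mono hbc) (Partition.cells_mono hab)

lemma ncard_skew_add_ncard_skew {a b c : Partition} (hab : a.Sub b) (hbc : b.Sub c) :
    (skew a b).ncard + (skew b c).ncard = (skew a c).ncard := by
  rw [← skew_union_skew hab hbc,
    Set.ncard_union_eq (disjoint_skew_skew a b c) (skew_finite a b) (skew_finite b c)]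

lemma sub_and_ncard_skew_of_sub_succ (α : ℕ → Partition) (l : ℕ)
    (h : ∀ i < l, (α i).Sub (α (i + 1))) :
    (α 0).Sub (α l) ∧
      (skew (α 0) (α l)).ncard = ∑ i ∈ Finset.range l, (skew (α i) (α (i + 1))).ncard := by
  induction l with
  | zero => exact ⟨fun _ => le_rfl, by simp [skew]⟩
  | succ l ih =>
    obtain ⟨hsub, hcard⟩ := ih fun i hi => h i (Nat.lt_succ_of_lt hi)
    have hlast := h l (Nat.lt_succ_self l)
    refine ⟨hsub.trans hlast, ?_⟩
    rw [Finset.sum_range_succ, ← hcard, ncard_skew_add_ncard_skew hsub hlast]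

lemma IsChain.ncard_skew {n : ℕ} {mu lam : Partition} {τ : List ℕ} {α : ℕ → Partition}
    (hc : IsChain n mu lam τ α) : (skew mu lam).ncard = τ.sum * n := by
  obtain ⟨rfl, rfl, hstrips⟩ := hc
  obtain ⟨-, hcard⟩ := sub_and_ncard_skew_of_sub_succ α τ.length fun i hi => (hstrips ⟨i, hi⟩).1
  rw [hcard, ← Fin.sum_univ_eq_sum_range, ← Fin.sum_univ_getElem τ, Finset.sum_mul]
  exact Finset.sum_congr rfl fun i _ => (hstrips i).2.1

lemma IsChain.sum_eq {n k : ℕ} (hn : 0 < n) {mu lam : Partition} {τ ρ : List ℕ}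
    {α β : ℕ → Partition} (hα : IsChain n mu lam τ α) (hβ : IsChain n mu lam ρ β)
    (hτ : τ.sum = k) : ρ.sum = k :=
  hτ ▸ Nat.eq_of_mul_eq_mul_right hn (hβ.ncard_skew.symm.trans hα.ncard_skew)

end Pleth

open Pleth

theorem horizontal_iff_max_length_general (n k : ℕ) (hn : 0 < n)
    (mu lam : Partition) (hstrip : IsWeightStrip n k mu lam) :
    IsHorizontalWeightStrip n k mu lam ↔
      IsGreatest {l : ℕ | ∃ (ρ : List ℕ) (β : ℕ → Partition), (∀ r ∈ ρ, 0 < r) ∧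
        IsHorizontalChain n mu lam ρ β ∧ ρ.length = l} k := by
  obtain ⟨τ, α, -, hτ, hα⟩ := hstrip
  -- Every chain from `μ` to `λ` has total weight `|λ/μ| / n = k`, so the weights of a horizontal
  -- chain form a composition of `k`; only `1 + ⋯ + 1` has `k` parts.
  let weights {ρ β} (hpos : ∀ r ∈ ρ, 0 < r) (hβ : IsHorizontalChain n mu lam ρ β) :
      Composition k := ⟨ρ, hpos _, hα.sum_eq hn hβ.1 hτ⟩
  constructor
  · rintro ⟨β, hβ⟩
    refine ⟨⟨_, β, by simp, hβ, List.length_replicate⟩, ?_⟩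
    rintro l ⟨ρ, γ, hpos, hγ, rfl⟩
    exact (weights hpos hγ).length_le
  · rintro ⟨⟨ρ, β, hpos, hβ, hlen⟩, -⟩
    have hones := congrArg Composition.blocks
      (Composition.eq_ones_iff_length.mpr (show (weights hpos hβ).length = k from hlen))
    rw [Composition.ones_blocks] at hones
    exact ⟨β, hones ▸ hβ⟩

/-- Corollary 2.3 (characterization of horizontal strips): if `λ/μ` is an
`n`-border strip of weight `k`, then `λ/μ` is a horizontal `n`-border strip of
weight `k` iff the maximal length of a horizontal `n`-border strip chain from
`μ` to `λ` equals `k`. -/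
theorem horizontal_iff_max_length (n k : ℕ) (hn : 0 < n) (hk : 0 < k)
    (mu lam : Partition) (hsub : mu.Sub lam) (hstrip : IsWeightStrip n k mu lam) :
    IsHorizontalWeightStrip n k mu lam ↔
      IsGreatest {l : ℕ | ∃ (ρ : List ℕ) (β : ℕ → Partition), (∀ r ∈ ρ, 0 < r) ∧
        IsHorizontalChain n mu lam ρ β ∧ ρ.length = l} k :=
  horizontal_iff_max_length_general n k hn mu lam hstrip
end

section
/- Let λ = (λ₁, …, λ_l) be a partition with all λ_i > 0, and let n, k, N be positive integers. Then, in ℚ[x₁, …, x_N]: Σ_{ν} det(h_{λ_i − n·ν_i − i + j})_{i,j=1}^{l} = Σ_{μ} det(M(λ/μ)) · det(h_{μ_i − i + j})_{i,j=1}^{l}, where the left sum is over all ν = (ν₁, …, ν_l) ∈ ℕ^l with ν₁ + … + ν_l = k, and the right sum is over all partitions μ ⊆ λ with |μ| = |λ| − nk (μ padded with zero parts to length l). -/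
open MvPolynomial

/-!
Write `s_μ` as the Jacobi–Trudi determinant `det (h_{c_i + j})` of the row vector
`c_i = μ_i - i`. Expanding `det M(λ/μ)` by Leibniz, the right-hand side becomes a sum over pairs
`(μ, σ)` with `M(λ/μ)_{σ j, j} = 1` for all `j` of `sign σ · s_μ`, which is the determinant with
rows `μ_j - j` permuted by `σ⁻¹`. The condition on `σ` says exactly that these permuted rows are
`λ_i - i - n ν_i` for some `ν ∈ ℕ^l`; comparing sizes gives `|ν| = k`, and the pigeonhole
principle gives `μ ⊆ λ`. Conversely a term on the left is nonzero only if its rows are distinct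
and none of them is identically zero, and then sorting the rows recovers `(μ, σ)` uniquely.
So the nonzero terms on both sides match bijectively.
-/

section Sorting

variable {α : Type*} [LinearOrder α] {l : ℕ}

theorem exists_perm_strictAnti_comp {b : Fin l → α} (hb : Function.Injective b) :
    ∃ σ : Equiv.Perm (Fin l), StrictAnti (b ∘ σ) :=
  ⟨Tuple.sort (OrderDual.toDual ∘ b),
    (Tuple.monotone_sort (OrderDual.toDual ∘ b)).dual_right.strictAnti_of_injective
      (hb.comp (Equiv.injective _))⟩

theorem perm_eq_of_antitone_comp {b : Fin l → α} (hb : Function.Injective b)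
    {σ τ : Equiv.Perm (Fin l)} (hσ : Antitone (b ∘ σ)) (hτ : Antitone (b ∘ τ)) : σ = τ :=
  Equiv.ext fun i => hb (congrFun (Tuple.unique_antitone hσ hτ) i)

end Sorting

theorem StrictAnti.antitone_add_val {l : ℕ} {c : Fin l → ℤ} (hc : StrictAnti c) :
    Antitone fun i : Fin l => c i + i := by
  cases l with
  | zero => exact fun i => i.elim0
  | succ l =>
    refine Fin.antitone_iff_succ_le.2 fun i => ?_
    have := hc (Fin.castSucc_lt_succ (i := i))
    simp only [Fin.val_succ, Fin.val_castSucc]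
    push_cast
    omega

namespace Pleth

open Finset Equiv

section JacobiTrudi

variable {R : Type*} [CommRing R] {l : ℕ}

def jtDet (h : ℤ → R) (b : Fin l → ℤ) : R :=
  Matrix.det (Matrix.of fun i j : Fin l => h (b i + j))

theorem jtDet_comp_perm (h : ℤ → R) (b : Fin l → ℤ) (σ : Perm (Fin l)) :
    jtDet h (b ∘ σ) = Perm.sign σ * jtDet h b :=
  Matrix.det_permute σ (Matrix.of fun i j : Fin l => h (b i + j))

theorem jtDet_eq_zero_of_not_injective (h : ℤ → R) {b : Fin l → ℤ}
    (hb : ¬ Function.Injective b) : jtDet h b = 0 := by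
  simp only [Function.Injective, not_forall] at hb
  obtain ⟨i, i', hbi, hne⟩ := hb
  exact Matrix.det_zero_of_row_eq hne (funext fun j => by simp [hbi])

theorem jtDet_eq_zero_of_lt {h : ℤ → R} (h0 : ∀ r < 0, h r = 0) {b : Fin l → ℤ} (i : Fin l)
    (hi : b i + (l - 1) < 0) : jtDet h b = 0 :=
  Matrix.det_eq_zero_of_row_eq_zero i fun j => h0 _ (by have := j.isLt; omega)

end JacobiTrudi

theorem hInt_eq_zero_of_neg (N : ℕ) {r : ℤ} (hr : r < 0) : hInt N r = 0 :=
  if_neg hr.not_ge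

namespace Partition

variable {l : ℕ}

theorem ext_parts {p q : Partition} (h : p.parts = q.parts) : p = q := by
  cases p; cases q; simp_all

theorem parts_eq_zero_of_length_le {p : Partition} {i : ℕ} (h : p.length ≤ i) :
    p.parts i = 0 := by
  by_contra hne
  have hsub : (Iic i : Set ℕ) ⊆ Function.support p.parts := fun j hj =>
    fun h0 => hne (Nat.le_zero.mp (h0 ▸ p.antitone (by simpa using hj)))
  have := Set.ncard_le_ncard hsub p.finite
  simp only [Set.ncard_coe_finset, Nat.card_Iic] at this
  exact absurd this (by unfold length at h; omega)

theorem finite_setOf_sub (lam : Partition) : {mu : Partition | mu.Sub lam}.Finite := by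
  let toFinsupp : Partition → ℕ →₀ ℕ := fun p => Finsupp.ofSupportFinite p.parts p.finite
  have hinj : toFinsupp.Injective := fun p q h =>
    ext_parts (congrArg (⇑) h)
  refine Set.Finite.of_finite_image ((Set.finite_Iic (toFinsupp lam)).subset ?_) hinj.injOn
  rintro _ ⟨mu, hmu, rfl⟩
  exact fun i => hmu i

def shifted (p : Partition) (l : ℕ) : Fin l → ℤ := fun i => (p.parts i : ℤ) - (i : ℤ)

theorem shifted_strictAnti (p : Partition) (l : ℕ) : StrictAnti (p.shifted l) := by
  intro i j hij
  have := p.antitone hij.le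
  simp only [shifted]
  omega

theorem sum_shifted {p : Partition} (hp : ∀ i, l ≤ i → p.parts i = 0) :
    ∑ i, p.shifted l i = p.size - ∑ i : Fin l, (i : ℤ) := by
  have hsize : p.size = ∑ i ∈ range l, p.parts i :=
    finsum_eq_sum_of_support_subset _ fun i hi => by
      by_contra h
      exact hi (hp i (by simpa using h))
  simp only [shifted, sum_sub_distrib, hsize, Nat.cast_sum,
    Fin.sum_univ_eq_sum_range (fun i => (p.parts i : ℤ))]

theorem eq_of_shifted_eq {p q : Partition} (hp : ∀ i, l ≤ i → p.parts i = 0)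
    (hq : ∀ i, l ≤ i → q.parts i = 0) (h : p.shifted l = q.shifted l) : p = q := by
  refine ext_parts (funext fun m => ?_)
  by_cases hm : m < l
  · have := congrFun h ⟨m, hm⟩
    simp only [shifted] at this
    omega
  · rw [hp m (by omega), hq m (by omega)]

/-- Parts are truncated at `0`, so this inverts `shifted` only when every `c i + i ≥ 0`. -/
def ofShifted (c : Fin l → ℤ) (hc : StrictAnti c) : Partition where
  parts m := if h : m < l then (c ⟨m, h⟩ + m).toNat else 0
  antitone m m' hmm' := by
    split_ifs with h' h
    · exact Int.toNat_le_toNat (StrictAnti.antitone_add_val hc (Fin.mk_le_mk.2 hmm'))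
    · omega
    · exact Nat.zero_le _
    · exact le_rfl
  finite := (Set.finite_Iio l).subset fun m hm => by
    by_contra h
    exact hm (dif_neg (by simpa using h))

theorem ofShifted_parts_eq_zero {c : Fin l → ℤ} (hc : StrictAnti c) {m : ℕ} (hm : l ≤ m) :
    (ofShifted c hc).parts m = 0 :=
  dif_neg (by omega)

theorem shifted_ofShifted {c : Fin l → ℤ} (hc : StrictAnti c) (h0 : ∀ i, 0 ≤ c i + i) :
    (ofShifted c hc).shifted l = c := by
  funext i
  have := h0 i
  simp only [shifted, ofShifted, i.isLt, dif_pos, Fin.eta]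
  omega

theorem exists_shifted_eq_comp_perm {b : Fin l → ℤ} (hb : Function.Injective b)
    (h0 : ∀ i, 0 ≤ b i + (l - 1)) :
    ∃ (p : Partition) (σ : Perm (Fin l)),
      (∀ i, l ≤ i → p.parts i = 0) ∧ p.shifted l = b ∘ σ := by
  obtain ⟨σ, hσ⟩ := exists_perm_strictAnti_comp hb
  have hnonneg : ∀ i : Fin l, 0 ≤ (b ∘ σ) i + i := fun i => by
    have hl : 0 < l := i.pos
    obtain ⟨last, hlast⟩ : ∃ last : Fin l, (last : ℕ) = l - 1 := ⟨⟨l - 1, by omega⟩, rfl⟩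
    have hmono := hσ.antitone_add_val (show i ≤ last from Fin.le_def.2 (by omega))
    have := h0 (σ last)
    simp only [Function.comp_apply, hlast, Nat.cast_pred hl] at hmono ⊢
    omega
  exact ⟨ofShifted _ hσ, σ, fun _ => ofShifted_parts_eq_zero hσ, shifted_ofShifted hσ hnonneg⟩

theorem eq_of_shifted_eq_comp {p q : Partition} (hp : ∀ i, l ≤ i → p.parts i = 0)
    (hq : ∀ i, l ≤ i → q.parts i = 0) {b : Fin l → ℤ} {σ τ : Perm (Fin l)}
    (hpb : p.shifted l = b ∘ σ) (hqb : q.shifted l = b ∘ τ) : p = q ∧ σ = τ := by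
  have hb : Function.Injective b :=
    .of_comp_right (hpb ▸ (p.shifted_strictAnti l).injective) σ.surjective
  have hστ : σ = τ := perm_eq_of_antitone_comp hb
    (hpb ▸ (p.shifted_strictAnti l).antitone) (hqb ▸ (q.shifted_strictAnti l).antitone)
  exact ⟨eq_of_shifted_eq hp hq (by rw [hpb, hqb, hστ]), hστ⟩

theorem sub_of_shifted_le {mu lam : Partition} (hmu : ∀ i, l ≤ i → mu.parts i = 0)
    {σ : Perm (Fin l)} (h : ∀ j, mu.shifted l j ≤ lam.shifted l (σ j)) : mu.Sub lam := by
  intro j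
  by_cases hj : l ≤ j
  · simp [hmu j hj]
  by_contra! hlt
  obtain ⟨J, rfl⟩ : ∃ J : Fin l, (J : ℕ) = j := ⟨⟨j, by omega⟩, rfl⟩
  -- row `J` of `μ` overhangs `λ`, so `σ` would have to send `{0, …, J}` into `{0, …, J - 1}`
  have hmaps : Set.MapsTo σ (Iic J) (Iio J) := fun i hi => by
    simp only [coe_Iic, coe_Iio, Set.mem_Iic, Set.mem_Iio] at hi ⊢
    by_contra! hle
    have h1 := mu.antitone (Fin.le_def.1 hi)
    have h2 := lam.antitone (Fin.le_def.1 hle)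
    have := h i
    simp only [shifted] at this
    simp only [Fin.le_def] at hi hle
    omega
  have := card_le_card_of_injOn σ hmaps σ.injective.injOn
  simp at this

theorem size_add_eq_of_shifted_eq {mu lam : Partition} (hmu : ∀ i, l ≤ i → mu.parts i = 0)
    (hlam : ∀ i, l ≤ i → lam.parts i = 0) {n : ℕ} {ν : Fin l → ℕ} {σ : Perm (Fin l)}
    (h : mu.shifted l = (fun i => lam.shifted l i - n * ν i) ∘ σ) :
    mu.size + n * ∑ i, ν i = lam.size := by
  have hsum := congrArg (fun c => ∑ i, c i) h
  simp only [Function.comp_apply, Equiv.sum_comp σ (fun i => lam.shifted l i - n * ν i),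
    sum_sub_distrib, ← mul_sum, sum_shifted hmu, sum_shifted hlam] at hsum
  have : ((mu.size + n * ∑ i, ν i : ℕ) : ℤ) = lam.size := by push_cast; linarith
  exact_mod_cast this

end Partition

theorem exists_shifted_eq_comp_of_jtDet_ne_zero {R : Type*} [CommRing R] {h : ℤ → R}
    (h0 : ∀ r < 0, h r = 0) {l n : ℕ} {lam : Partition} (hlam : ∀ i, l ≤ i → lam.parts i = 0)
    {ν : Fin l → ℕ} (hne : jtDet h (fun i => lam.shifted l i - n * ν i) ≠ 0) :
    ∃ (mu : Partition) (σ : Perm (Fin l)), mu.Sub lam ∧ mu.size + n * ∑ i, ν i = lam.size ∧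
      mu.shifted l = (fun i => lam.shifted l i - n * ν i) ∘ σ := by
  have hinj : Function.Injective fun i => lam.shifted l i - n * ν i :=
    not_not.1 fun h' => hne (jtDet_eq_zero_of_not_injective h h')
  have hlow : ∀ i, 0 ≤ lam.shifted l i - n * ν i + (l - 1) :=
    fun i => not_lt.1 fun h' => hne (jtDet_eq_zero_of_lt h0 i h')
  obtain ⟨mu, σ, hmu0, hmu⟩ := Partition.exists_shifted_eq_comp_perm hinj hlow
  refine ⟨mu, σ, Partition.sub_of_shifted_le hmu0 (σ := σ) fun j => ?_,
    Partition.size_add_eq_of_shifted_eq hmu0 hlam hmu, hmu⟩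
  rw [hmu]
  exact sub_le_self _ (by positivity)

section Admissible

variable {l : ℕ}

/-- `M(λ/μ)_{σ j, j} = 1` for all `j`: the permutations contributing to the Leibniz expansion of
`det M(λ/μ)`. -/
def IsAdmissible (n : ℕ) (mu lam : Partition) (l : ℕ) (σ : Perm (Fin l)) : Prop :=
  ∀ j, mu.shifted l j ≤ lam.shifted l (σ j) ∧ (n : ℤ) ∣ lam.shifted l (σ j) - mu.shifted l j

theorem det_Mmat_eq_sum (n : ℕ) (mu lam : Partition) (l : ℕ)
    [DecidablePred (IsAdmissible n mu lam l)] :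
    (Mmat n mu lam l).det = ∑ σ ∈ univ.filter (IsAdmissible n mu lam l), (Perm.sign σ : ℤ) := by
  rw [Matrix.det_apply', sum_filter]
  refine sum_congr rfl fun σ _ => ?_
  simp only [Mmat, Matrix.of_apply, Fintype.prod_boole, mul_ite, mul_one, mul_zero]
  exact if_congr Iff.rfl rfl rfl

theorem isAdmissible_iff {n : ℕ} {mu lam : Partition} {σ : Perm (Fin l)} :
    IsAdmissible n mu lam l σ ↔
      ∃ ν : Fin l → ℕ, mu.shifted l = (fun i => lam.shifted l i - n * ν i) ∘ σ := by
  constructor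
  · intro h
    have : ∀ j, ∃ q : ℕ, mu.shifted l j = lam.shifted l (σ j) - n * q := fun j => by
      obtain ⟨hle, q, hq⟩ := h j
      refine ⟨q.toNat, ?_⟩
      rcases le_or_gt 0 q with hq0 | hq0
      · rw [Int.toNat_of_nonneg hq0]
        linarith
      · have : (n : ℤ) * q ≤ 0 := mul_nonpos_of_nonneg_of_nonpos (by positivity) hq0.le
        simp only [Int.toNat_of_nonpos hq0.le, Nat.cast_zero, mul_zero]
        linarith
    choose q hq using this
    exact ⟨q ∘ σ.symm, funext fun j => by simpa using hq j⟩
  · rintro ⟨ν, hν⟩ j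
    rw [hν]
    exact ⟨sub_le_self _ (by positivity), ν (σ j), by simp⟩

theorem det_Mmat_mul_jtDet {R : Type*} [CommRing R] (h : ℤ → R) (n : ℕ) (mu lam : Partition)
    (l : ℕ) [DecidablePred (IsAdmissible n mu lam l)] :
    ((Mmat n mu lam l).det : R) * jtDet h (mu.shifted l) =
      ∑ σ ∈ univ.filter (IsAdmissible n mu lam l), jtDet h (mu.shifted l ∘ σ.symm) := by
  rw [det_Mmat_eq_sum, Int.cast_sum, sum_mul]
  refine sum_congr rfl fun σ _ => ?_
  rw [jtDet_comp_perm, Perm.sign_symm]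

theorem sum_jtDet_sub_eq_sum_admissible {R : Type*} [CommRing R] {h : ℤ → R}
    (h0 : ∀ r < 0, h r = 0) {n : ℕ} (hn : 0 < n) (k : ℕ) {lam : Partition}
    (hlam : ∀ i, l ≤ i → lam.parts i = 0) {S : Finset Partition}
    (hS : ∀ mu, mu ∈ S ↔ mu.Sub lam ∧ mu.size + n * k = lam.size)
    [DecidablePred fun p : Partition × Perm (Fin l) => IsAdmissible n p.1 lam l p.2] :
    ∑ ν ∈ Nat.antidiagonalTuple l k, jtDet h (fun i => lam.shifted l i - n * ν i) =
      ∑ p ∈ (S ×ˢ univ).filter (fun p => IsAdmissible n p.1 lam l p.2),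
        jtDet h (p.1.shifted l ∘ p.2.symm) := by
  have hS0 : ∀ mu ∈ S, ∀ i, l ≤ i → mu.parts i = 0 := fun mu hmu i hi =>
    Nat.eq_zero_of_le_zero (hlam i hi ▸ ((hS mu).1 hmu).1 i)
  have hsub_inj : ∀ ν ν' : Fin l → ℕ, (fun i => lam.shifted l i - n * ν i) =
      (fun i => lam.shifted l i - n * ν' i) → ν = ν' := fun ν ν' h => funext fun i => by
    have := congrFun h i
    simp only [sub_right_inj, mul_eq_mul_left_iff, Nat.cast_inj] at this
    omega
  symm
  refine sum_bij_ne_zero (fun p hp _ => (isAdmissible_iff.1 (mem_filter.1 hp).2).choose)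
    (fun p hp _ => ?_) (fun p hp _ p' hp' _ h => ?_) (fun ν hν hne => ?_)
    (fun p hp _ => ?_)
  · obtain ⟨hpS, hadm⟩ := mem_filter.1 hp
    have hsize := Partition.size_add_eq_of_shifted_eq (hS0 _ (mem_product.1 hpS).1) hlam
      (isAdmissible_iff.1 hadm).choose_spec
    have := ((hS _).1 (mem_product.1 hpS).1).2
    rw [Nat.mem_antidiagonalTuple]
    exact Nat.eq_of_mul_eq_mul_left hn (by omega)
  · obtain ⟨hpS, hadm⟩ := mem_filter.1 hp
    obtain ⟨hpS', hadm'⟩ := mem_filter.1 hp'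
    have hν := (isAdmissible_iff.1 hadm).choose_spec
    have hν' := (isAdmissible_iff.1 hadm').choose_spec
    rw [← h] at hν'
    obtain ⟨h1, h2⟩ := Partition.eq_of_shifted_eq_comp (hS0 _ (mem_product.1 hpS).1)
      (hS0 _ (mem_product.1 hpS').1) hν hν'
    exact Prod.ext h1 h2
  · obtain ⟨mu, σ, hsub, hsize, hmu⟩ := exists_shifted_eq_comp_of_jtDet_ne_zero h0 hlam hne
    have hadm : IsAdmissible n mu lam l σ := isAdmissible_iff.2 ⟨ν, hmu⟩
    have hmuS : mu ∈ S := (hS mu).2 ⟨hsub, Nat.mem_antidiagonalTuple.1 hν ▸ hsize⟩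
    refine ⟨(mu, σ), mem_filter.2 ⟨mem_product.2 ⟨hmuS, mem_univ _⟩, hadm⟩,
      by rwa [(Equiv.comp_symm_eq _ _ _).2 hmu], hsub_inj _ _ ?_⟩
    exact ((Equiv.comp_symm_eq _ _ _).2 (isAdmissible_iff.1 hadm).choose_spec).symm.trans
      ((Equiv.comp_symm_eq _ _ _).2 hmu)
  · exact congrArg (jtDet h)
      ((Equiv.comp_symm_eq _ _ _).2 (isAdmissible_iff.1 (mem_filter.1 hp).2).choose_spec)

end Admissible

end Pleth

open Pleth

theorem sum_compositions_eq_sum_det_general (n k N : ℕ) (hn : 0 < n)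
    (lam : Partition) :
    ∑ ν ∈ Finset.Nat.antidiagonalTuple lam.length k,
      Matrix.det (Matrix.of fun i j : Fin lam.length =>
        hInt N ((lam.parts i : ℤ) - ((n * ν i : ℕ) : ℤ) - (i : ℤ) + (j : ℤ))) =
    ∑ᶠ mu ∈ {mu : Partition | mu.Sub lam ∧ mu.size + n * k = lam.size},
      ((Matrix.det (Mmat n mu lam lam.length) : ℤ) : MvPolynomial (Fin N) ℚ) *
        Matrix.det (Matrix.of fun i j : Fin lam.length =>
          hInt N ((mu.parts i : ℤ) - (i : ℤ) + (j : ℤ))) := by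
  classical
  have hlam : ∀ i, lam.length ≤ i → lam.parts i = 0 :=
    fun _ => Partition.parts_eq_zero_of_length_le
  have hS : {mu : Partition | mu.Sub lam ∧ mu.size + n * k = lam.size}.Finite :=
    (Partition.finite_setOf_sub lam).subset fun _ h => h.1
  have hlhs : ∀ ν : Fin lam.length → ℕ,
      Matrix.det (Matrix.of fun i j : Fin lam.length =>
        hInt N ((lam.parts i : ℤ) - ((n * ν i : ℕ) : ℤ) - (i : ℤ) + (j : ℤ))) =
      jtDet (hInt N) (fun i => lam.shifted lam.length i - n * ν i) := fun ν => by
    simp only [jtDet, Partition.shifted, Nat.cast_mul, sub_right_comm]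
  rw [finsum_mem_eq_finite_toFinset_sum _ hS, Finset.sum_congr rfl fun ν _ => hlhs ν,
    sum_jtDet_sub_eq_sum_admissible (fun _ => hInt_eq_zero_of_neg N) hn k hlam
      (fun _ => hS.mem_toFinset),
    Finset.sum_finset_product _ hS.toFinset
      (fun mu => Finset.univ.filter (IsAdmissible n mu lam _)) (by simp)]
  exact Finset.sum_congr rfl fun mu _ => (det_Mmat_mul_jtDet (hInt N) n mu lam _).symm

/-- The Jacobi–Trudi form of the vertex-operator identity
`V_k^{(n)*} S_λ·1 = Σ_{ν ⊨ k} S_{λ−nν}·1 = Σ_μ det(M(λ/μ)) S_μ·1`. -/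
theorem sum_compositions_eq_sum_det (n k N : ℕ) (hn : 0 < n) (hk : 0 < k) (hN : 0 < N)
    (lam : Partition) :
    ∑ ν ∈ Finset.Nat.antidiagonalTuple lam.length k,
      Matrix.det (Matrix.of fun i j : Fin lam.length =>
        hInt N ((lam.parts i : ℤ) - ((n * ν i : ℕ) : ℤ) - (i : ℤ) + (j : ℤ))) =
    ∑ᶠ mu ∈ {mu : Partition | mu.Sub lam ∧ mu.size + n * k = lam.size},
      ((Matrix.det (Mmat n mu lam lam.length) : ℤ) : MvPolynomial (Fin N) ℚ) *
        Matrix.det (Matrix.of fun i j : Fin lam.length =>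
          hInt N ((mu.parts i : ℤ) - (i : ℤ) + (j : ℤ))) :=
  sum_compositions_eq_sum_det_general n k N hn lam
end

section
/- Let n and τ₁ be positive integers and let μ ⊆ α ⊆ λ be partitions with l = ℓ(λ) (μ and α padded with zero parts to length l). Suppose α/μ is a border strip of size τ₁·n whose nonzero rows are exactly j₁, j₁+1, …, j_s (i.e. α_d > μ_d exactly for j₁ ≤ d ≤ j_s). Then A(λ/μ) is obtained from A(λ/α) by the column transformation C^{τ₁}_{j₁,j_s}: for c < j₁ or c > j_s, the c-th column of A(λ/μ) equals the c-th column of A(λ/α); for j₁ ≤ c < j_s, the c-th column of A(λ/μ) equals the (c+1)-st column of A(λ/α); and the j_s-th column of A(λ/μ) equals the j₁-st column of A(λ/α) with τ₁·n added to every entry. -/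
open MvPolynomial

open Pleth
/-- Proposition 3.4(i): if `α/μ` is a `τ₁n`-border strip occupying exactly rows
`j₁, …, j_s` (0-indexed), then `A(λ/μ) = C^{τ₁}_{j₁,j_s}(A(λ/α))`. -/
theorem column_transformation (n τ₁ : ℕ) (hn : 0 < n) (hτ : 0 < τ₁)
    (mu alpha lam : Partition) (hma : mu.Sub alpha) (hal : alpha.Sub lam)
    (j₁ js : ℕ) (hj : j₁ ≤ js) (hjs : js < lam.length)
    (hbs : IsBorderStrip mu alpha (τ₁ * n))
    (hrows : ∀ d : ℕ, mu.parts d < alpha.parts d ↔ (j₁ ≤ d ∧ d ≤ js)) :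
    ∀ i c : Fin lam.length,
      (((c : ℕ) < j₁ ∨ js < (c : ℕ)) →
        Amat mu lam lam.length i c = Amat alpha lam lam.length i c) ∧
      (∀ (_ : j₁ ≤ (c : ℕ)) (h2 : (c : ℕ) < js),
        Amat mu lam lam.length i c =
          Amat alpha lam lam.length i ⟨(c : ℕ) + 1, by omega⟩) ∧
      ((c : ℕ) = js →
        Amat mu lam lam.length i c =
          Amat alpha lam lam.length i ⟨j₁, by omega⟩ + ((τ₁ * n : ℕ) : ℤ)) := by
  classical
  obtain ⟨hsub, hcard, hconn, h2x2⟩ := hbs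
  have hrow : ∀ d, j₁ ≤ d → d ≤ js → mu.parts d < alpha.parts d :=
    fun d h1 h2 => (hrows d).mpr ⟨h1, h2⟩
  have houter : ∀ d, ¬(j₁ ≤ d ∧ d ≤ js) → mu.parts d = alpha.parts d := by
    intro d hd
    rcases lt_or_eq_of_le (hma d) with h | h
    · exact absurd ((hrows d).mp h) hd
    · exact h
  -- For j₁ ≤ d < js, α_{d+1} = μ_d + 1
  have hstep : ∀ d, j₁ ≤ d → d < js → alpha.parts (d + 1) = mu.parts d + 1 := by
    intro d h1 h2
    have hd : mu.parts d < alpha.parts d := hrow d h1 (le_of_lt h2)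
    have hd1 : mu.parts (d + 1) < alpha.parts (d + 1) := hrow _ (by omega) h2
    have hmudd : mu.parts (d + 1) ≤ mu.parts d := mu.antitone (by omega)
    have haldd : alpha.parts (d + 1) ≤ alpha.parts d := alpha.antitone (by omega)
    have hub : alpha.parts (d + 1) ≤ mu.parts d + 1 := by
      by_contra hc
      push_neg at hc
      exact h2x2 ⟨d, mu.parts d,
        ⟨by simpa [Partition.cells] using hd, by simp [Partition.cells]⟩,
        ⟨by simp only [Partition.cells, Set.mem_setOf_eq]; omega,
         by simp only [Partition.cells, Set.mem_setOf_eq]; omega⟩,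
        ⟨by simp only [Partition.cells, Set.mem_setOf_eq]; omega,
         by simp only [Partition.cells, Set.mem_setOf_eq]; omega⟩,
        ⟨by simp only [Partition.cells, Set.mem_setOf_eq]; omega,
         by simp only [Partition.cells, Set.mem_setOf_eq]; omega⟩⟩
    have hlb : mu.parts d < alpha.parts (d + 1) := by
      by_contra hc
      push_neg at hc
      have ha : (d, mu.parts d) ∈ skew mu alpha := by
        constructor
        · simpa [Partition.cells] using hd
        · simp [Partition.cells]
      have hb : (d + 1, mu.parts (d + 1)) ∈ skew mu alpha := by
        constructor
        · simpa [Partition.cells] using hd1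
        · simp [Partition.cells]
      have hpath := hconn _ ha _ hb
      have key : ∀ x : ℕ × ℕ,
          Relation.ReflTransGen (fun x y => y ∈ skew mu alpha ∧ Adj x y)
            (d, mu.parts d) x → x ∈ skew mu alpha ∧ x.1 ≤ d := by
        intro x hx
        induction hx with
        | refl => exact ⟨ha, le_rfl⟩
        | tail hxy hstep ih =>
          rename_i x' y'
          obtain ⟨hxS, hxd⟩ := ih
          obtain ⟨hyS, hadj⟩ := hstep
          refine ⟨hyS, ?_⟩
          by_contra hyd
          push_neg at hyd
          -- y'.2 < μ_d while x'.2 ≥ μ_d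
          have hy2 : y'.2 < mu.parts d := by
            have h1 : y'.2 < alpha.parts y'.1 := hyS.1
            have h2 : alpha.parts y'.1 ≤ alpha.parts (d + 1) := alpha.antitone hyd
            omega
          have hx2 : mu.parts d ≤ x'.2 := by
            have h1 : ¬ x'.2 < mu.parts x'.1 := hxS.2
            have h2 : mu.parts d ≤ mu.parts x'.1 := mu.antitone hxd
            omega
          rcases hadj with ⟨h, _⟩ | ⟨h, _⟩
          · omega
          · omega
      have := (key _ hpath).2
      simp at this
    omega
  -- The skew diagram as an explicit finset
  set F : Finset (ℕ × ℕ) := (Finset.Icc j₁ js).biUnion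
      (fun d => {d} ×ˢ Finset.Ico (mu.parts d) (alpha.parts d)) with hF
  have hset : skew mu alpha = ↑F := by
    ext ⟨i, j⟩
    simp only [skew, Set.mem_diff, Partition.cells, Set.mem_setOf_eq, hF,
      Finset.coe_biUnion, Finset.coe_Icc, Set.mem_Icc, Set.mem_iUnion,
      Finset.coe_product, Finset.coe_singleton, Finset.coe_Ico,
      Set.mem_prod, Set.mem_singleton_iff, Set.mem_Ico]
    constructor
    · rintro ⟨h1, h2⟩
      push_neg at h2
      have : mu.parts i < alpha.parts i := lt_of_le_of_lt h2 h1
      obtain ⟨ha, hb⟩ := (hrows i).mp this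
      exact ⟨i, ⟨ha, hb⟩, rfl, h2, h1⟩
    · rintro ⟨d, _, rfl, h1, h2⟩
      exact ⟨h2, by omega⟩
  have hcardF : F.card = ∑ d ∈ Finset.Icc j₁ js, (alpha.parts d - mu.parts d) := by
    rw [hF, Finset.card_biUnion]
    · refine Finset.sum_congr rfl fun d _ => ?_
      simp [Nat.card_Ico]
    · intro a _ b _ hab
      simp only [Finset.disjoint_left, Finset.mem_product, Finset.mem_singleton]
      rintro ⟨i, j⟩ ⟨rfl, _⟩ ⟨h, _⟩
      exact hab h
  have htel : ∀ k, j₁ + k ≤ js →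
      ∑ d ∈ Finset.Icc j₁ (j₁ + k), (alpha.parts d - mu.parts d)
        = alpha.parts j₁ + k - mu.parts (j₁ + k) := by
    intro k
    induction k with
    | zero => intro _; simp
    | succ k ih =>
      intro hk
      have hk' : j₁ + k ≤ js := by omega
      have hmono : mu.parts (j₁ + k) ≤ mu.parts j₁ := mu.antitone (by omega)
      have hj1 : mu.parts j₁ < alpha.parts j₁ := hrow j₁ le_rfl hj
      have hs := hstep (j₁ + k) (by omega) (by omega)
      have hmono2 : mu.parts (j₁ + k + 1) ≤ mu.parts (j₁ + k) := mu.antitone (by omega)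
      have : j₁ + (k + 1) = (j₁ + k) + 1 := by omega
      rw [this, Finset.sum_Icc_succ_top (by omega), ih hk', hs]
      omega
  have hsum : alpha.parts j₁ + (js - j₁) - mu.parts js = τ₁ * n := by
    have h1 : j₁ + (js - j₁) = js := by omega
    have := htel (js - j₁) (by omega)
    rw [h1] at this
    rw [← this, ← hcardF, ← hcard, hset, Set.ncard_coe_finset]
  have hmono : mu.parts js ≤ mu.parts j₁ := mu.antitone hj
  have hj1 : mu.parts j₁ < alpha.parts j₁ := hrow j₁ le_rfl hj
  have hkey : mu.parts js + τ₁ * n = alpha.parts j₁ + (js - j₁) := by omega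
  intro i c
  refine ⟨?_, ?_, ?_⟩
  · intro hc
    have h := houter c (by omega)
    simp only [Amat, Matrix.of_apply, h]
  · intro h1 h2
    have h := hstep c h1 h2
    simp only [Amat, Matrix.of_apply]
    push_cast
    omega
  · intro hc
    simp only [Amat, Matrix.of_apply, hc]
    push_cast
    omega
end

section
/- Let n and τ₂ be positive integers and let μ ⊆ α ⊆ λ be partitions with l = ℓ(λ) (μ and α padded with zero parts to length l). Suppose λ/α is a border strip of size τ₂·n whose nonzero rows are exactly i₁, i₁+1, …, i_r (i.e. λ_d > α_d exactly for i₁ ≤ d ≤ i_r). Then A(λ/μ) is obtained from A(α/μ) by the row transformation R^{τ₂}_{i_r,i₁}: for t < i₁ or t > i_r, the t-th row of A(λ/μ) equals the t-th row of A(α/μ); for i₁ < t ≤ i_r, the t-th row of A(λ/μ) equals the (t−1)-st row of A(α/μ); and the i₁-st row of A(λ/μ) equals the i_r-th row of A(α/μ) with τ₂·n added to every entry. -/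
open MvPolynomial

open Pleth

section Aux

private lemma pleth_mem_skew (alpha lam : Partition) (d c : ℕ) :
    (d, c) ∈ skew alpha lam ↔ alpha.parts d ≤ c ∧ c < lam.parts d := by
  simp only [skew, Partition.cells, Set.mem_diff, Set.mem_setOf_eq]
  omega

private lemma pleth_path_mem {S : Set (ℕ × ℕ)} {a b : ℕ × ℕ}
    (hp : Relation.ReflTransGen (fun x y => y ∈ S ∧ Adj x y) a b) :
    b = a ∨ b ∈ S := by
  induction hp with
  | refl => exact Or.inl rfl
  | tail _ h _ => exact Or.inr h.1

private lemma pleth_cross {S : Set (ℕ × ℕ)} {t : ℕ} {a b : ℕ × ℕ}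
    (haS : a ∈ S)
    (hp : Relation.ReflTransGen (fun x y => y ∈ S ∧ Adj x y) a b)
    (ha : t + 1 ≤ a.1) (hb : b.1 ≤ t) :
    ∃ c, (t, c) ∈ S ∧ (t + 1, c) ∈ S := by
  induction hp with
  | refl => omega
  | @tail m b' hp' hstep ih =>
    by_cases hm : t + 1 ≤ m.1
    · obtain ⟨hbS', hadj⟩ := hstep
      rcases hadj with ⟨h1, _⟩ | ⟨h2, h3 | h3⟩
      · omega
      · omega
      · have hmS : m ∈ S := (pleth_path_mem hp').elim (fun h => h ▸ haS) id
        refine ⟨b'.2, ?_, ?_⟩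
        · have e1 : (t, b'.2) = b' := by
            have : b'.1 = t := by omega
            exact Prod.ext this.symm rfl
          rw [e1]; exact hbS'
        · have e2 : (t + 1, b'.2) = m := by
            have h4 : m.1 = t + 1 := by omega
            exact Prod.ext h4.symm h2.symm
          rw [e2]; exact hmS
    · exact ih (by omega)

end Aux


/-- Proposition 3.4(ii): if `λ/α` is a `τ₂n`-border strip occupying exactly rows
`i₁, …, i_r` (0-indexed), then `A(λ/μ) = R^{τ₂}_{i_r,i₁}(A(α/μ))`. -/
theorem row_transformation (n τ₂ : ℕ) (hn : 0 < n) (hτ : 0 < τ₂)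
    (mu alpha lam : Partition) (hma : mu.Sub alpha) (hal : alpha.Sub lam)
    (i₁ ir : ℕ) (hi : i₁ ≤ ir) (hir : ir < lam.length)
    (hbs : IsBorderStrip alpha lam (τ₂ * n))
    (hrows : ∀ d : ℕ, alpha.parts d < lam.parts d ↔ (i₁ ≤ d ∧ d ≤ ir)) :
    ∀ t j : Fin lam.length,
      (((t : ℕ) < i₁ ∨ ir < (t : ℕ)) →
        Amat mu lam lam.length t j = Amat mu alpha lam.length t j) ∧
      (∀ (h1 : i₁ < (t : ℕ)) (_ : (t : ℕ) ≤ ir),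
        Amat mu lam lam.length t j =
          Amat mu alpha lam.length ⟨(t : ℕ) - 1, by omega⟩ j) ∧
      ((t : ℕ) = i₁ →
        Amat mu lam lam.length t j =
          Amat mu alpha lam.length ⟨ir, hir⟩ j + ((τ₂ * n : ℕ) : ℤ)) := by
  classical
  obtain ⟨hsub, hncard, hconn, h2x2⟩ := hbs
  -- rows outside [i₁, ir] are equal
  have heq : ∀ d, d < i₁ ∨ ir < d → lam.parts d = alpha.parts d := by
    intro d hd
    have h1 := hrows d
    have h2 := hal d
    omega
  -- key1 : consecutive rows of the strip
  have key1 : ∀ t, i₁ < t → t ≤ ir → lam.parts t = alpha.parts (t - 1) + 1 := by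
    intro t ht1 ht2
    obtain ⟨s, rfl⟩ : ∃ s, t = s + 1 := ⟨t - 1, by omega⟩
    simp only [Nat.add_sub_cancel]
    have hsrow : alpha.parts s < lam.parts s := (hrows s).2 ⟨by omega, by omega⟩
    have hs1row : alpha.parts (s + 1) < lam.parts (s + 1) :=
      (hrows (s + 1)).2 ⟨by omega, by omega⟩
    -- upper bound from No2x2
    have hub : lam.parts (s + 1) ≤ alpha.parts s + 1 := by
      by_contra hcon
      push_neg at hcon
      exact h2x2 ⟨s, alpha.parts s,
        (pleth_mem_skew alpha lam s _).2 ⟨le_rfl, hsrow⟩,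
        (pleth_mem_skew alpha lam (s + 1) _).2
          ⟨alpha.antitone (Nat.le_succ s), by omega⟩,
        (pleth_mem_skew alpha lam s _).2
          ⟨by omega, by have := lam.antitone (show s ≤ s + 1 by omega); omega⟩,
        (pleth_mem_skew alpha lam (s + 1) _).2
          ⟨by have := alpha.antitone (show s ≤ s + 1 by omega); omega, by omega⟩⟩
    -- lower bound from connectivity
    have hlb : alpha.parts s + 1 ≤ lam.parts (s + 1) := by
      have haS : ((s + 1, alpha.parts (s + 1)) : ℕ × ℕ) ∈ skew alpha lam :=
        (pleth_mem_skew alpha lam _ _).2 ⟨le_rfl, hs1row⟩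
      have hbS : ((s, alpha.parts s) : ℕ × ℕ) ∈ skew alpha lam :=
        (pleth_mem_skew alpha lam _ _).2 ⟨le_rfl, hsrow⟩
      have hp := hconn _ haS _ hbS
      obtain ⟨c, hc1, hc2⟩ := pleth_cross (t := s) haS hp (by simp) (by simp)
      have h1 := (pleth_mem_skew alpha lam s c).1 hc1
      have h2 := (pleth_mem_skew alpha lam (s + 1) c).1 hc2
      omega
    omega
  -- cardinality of the skew diagram as a finset sum
  have hSF : skew alpha lam =
      ↑((Finset.Icc i₁ ir).biUnion
        (fun d => {d} ×ˢ Finset.Ico (alpha.parts d) (lam.parts d))) := by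
    ext ⟨d, c⟩
    simp only [pleth_mem_skew, Finset.coe_biUnion, Finset.mem_coe, Finset.mem_Icc,
      Set.mem_iUnion, Finset.mem_product, Finset.mem_singleton, Finset.mem_Ico]
    constructor
    · rintro ⟨h1, h2⟩
      have h3 := hrows d
      exact ⟨d, by omega, rfl, h1, h2⟩
    · rintro ⟨d', _, rfl, h1, h2⟩
      exact ⟨h1, h2⟩
  have hsum : ∑ d ∈ Finset.Icc i₁ ir, (lam.parts d - alpha.parts d) = τ₂ * n := by
    rw [hSF, Set.ncard_coe_finset] at hncard
    rw [← hncard]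
    rw [Finset.card_biUnion]
    · refine Finset.sum_congr rfl fun d _ => ?_
      simp [Nat.card_Ico]
    · intro x _ y _ hxy
      simp only [Finset.disjoint_left, Finset.mem_product, Finset.mem_singleton]
      rintro ⟨a, b⟩ ⟨rfl, _⟩ ⟨h, _⟩
      exact hxy h
  -- telescoping
  have htel : ∀ m, i₁ ≤ m → m ≤ ir →
      (∑ d ∈ Finset.Icc i₁ m, (lam.parts d - alpha.parts d)) + alpha.parts m
        = lam.parts i₁ + (m - i₁) := by
    intro m hm
    induction m, hm using Nat.le_induction with
    | base =>
      intro _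
      simp only [Finset.Icc_self, Finset.sum_singleton]
      have := hal i₁
      omega
    | succ m hm ih =>
      intro hm1
      rw [Finset.sum_Icc_succ_top (by omega)]
      have h1 := key1 (m + 1) (by omega) hm1
      have h2 := ih (by omega)
      have h3 := hal (m + 1)
      simp only [Nat.add_sub_cancel] at h1
      omega
  have key2 : lam.parts i₁ + ir = alpha.parts ir + τ₂ * n + i₁ := by
    have h1 := htel ir hi le_rfl
    omega
  intro t j
  refine ⟨fun ht => ?_, fun h1 h2 => ?_, fun ht => ?_⟩
  · simp only [Amat, Matrix.of_apply]
    rw [heq (t : ℕ) ht]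
  · simp only [Amat, Matrix.of_apply]
    have h3 := key1 (t : ℕ) h1 h2
    omega
  · simp only [Amat, Matrix.of_apply]
    have h5 : lam.parts (t : ℕ) + ir = alpha.parts ir + τ₂ * n + i₁ := ht ▸ key2
    push_cast
    omega
end

section
/- Let n, k be positive integers and let μ ⊆ λ be partitions. Then for every horizontal n-border strip chain μ = α^{(0)} ⊆ α^{(1)} ⊆ … ⊆ α^{(k)} = λ of weight (1, 1, …, 1) (k ones) from μ to λ, the determinant of the integer matrix M(λ/μ) equals the sign of the chain: det M(λ/μ) = ∏_{i=1}^{k} (−1)^{spin(α^{(i)}/α^{(i−1)})}. In particular, this sign does not depend on the chosen horizontal chain. -/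
open MvPolynomial

namespace Pleth

/-! ### Auxiliary development for Theorem 3.5 -/

section Aux

/-- Positivity of parts characterizes indices below the length. -/
lemma Partition.lt_length_iff (p : Partition) {j : ℕ} : j < p.length ↔ 0 < p.parts j := by
  have hne : {m : ℕ | p.parts m = 0}.Nonempty := by
    obtain ⟨m, hm⟩ := p.finite.infinite_compl.nonempty
    exact ⟨m, by simpa [Function.support] using hm⟩
  set k := sInf {m : ℕ | p.parts m = 0} with hk
  have hk0 : p.parts k = 0 := Nat.sInf_mem hne
  have hsupp : Function.support p.parts = Set.Iio k := by
    ext j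
    simp only [Function.mem_support, Set.mem_Iio]
    constructor
    · intro hj
      by_contra h
      push_neg at h
      have := p.antitone h
      omega
    · intro hj
      exact fun h0 => Nat.notMem_of_lt_sInf hj h0
  have hlen : p.length = k := by
    rw [Partition.length, hsupp, ← Finset.coe_Iio, Set.ncard_coe_finset, Nat.card_Iio]
  rw [hlen]
  constructor
  · intro h
    have : j ∈ Function.support p.parts := by rw [hsupp]; exact h
    simpa [Function.mem_support, Nat.pos_iff_ne_zero] using this
  · intro h
    have : j ∈ Function.support p.parts := by
      simp [Function.mem_support]; omega
    rwa [hsupp] at this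

lemma Partition.length_le_of_sub {p q : Partition} (h : p.Sub q) : p.length ≤ q.length := by
  by_contra hlt
  push_neg at hlt
  have h1 : 0 < p.parts q.length := p.lt_length_iff.mp hlt
  have h2 : p.parts q.length ≤ q.parts q.length := h _
  have h3 : ¬ 0 < q.parts q.length := fun hp => lt_irrefl _ (q.lt_length_iff.mpr hp)
  omega

lemma Partition.beta_strictAnti (p : Partition) {i j : ℕ} (hij : i < j) :
    (p.parts j : ℤ) - j < (p.parts i : ℤ) - i := by
  have h := p.antitone hij.le
  have : (p.parts j : ℤ) ≤ p.parts i := Int.ofNat_le.mpr h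
  omega

lemma mem_skew {mu nu : Partition} {c : ℕ × ℕ} :
    c ∈ skew mu nu ↔ mu.parts c.1 ≤ c.2 ∧ c.2 < nu.parts c.1 := by
  simp only [skew, Partition.cells, Set.mem_diff, Set.mem_setOf_eq, not_lt]
  tauto

/-! #### Path lemmas for connected sets -/

private lemma adj_fst {x y : ℕ × ℕ} (h : Adj x y) :
    y.1 = x.1 ∨ x.1 + 1 = y.1 ∨ y.1 + 1 = x.1 := by
  rcases h with ⟨h, _⟩ | ⟨_, h | h⟩
  · exact Or.inl h.symm
  · exact Or.inr (Or.inl h)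
  · exact Or.inr (Or.inr h)

private lemma rtg_mem {S : Set (ℕ × ℕ)} {a b : ℕ × ℕ} (ha : a ∈ S)
    (h : Relation.ReflTransGen (fun x y => y ∈ S ∧ Adj x y) a b) : b ∈ S := by
  induction h with
  | refl => exact ha
  | tail _ h2 _ => exact h2.1

private lemma rtg_interval {S : Set (ℕ × ℕ)} {a b : ℕ × ℕ} (ha : a ∈ S)
    (h : Relation.ReflTransGen (fun x y => y ∈ S ∧ Adj x y) a b) :
    ∀ j, min a.1 b.1 ≤ j → j ≤ max a.1 b.1 → ∃ c ∈ S, c.1 = j := by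
  induction h with
  | refl =>
    intro j h1 h2
    have : j = a.1 := by omega
    exact ⟨a, ha, this.symm⟩
  | @tail b c hab hbc ih =>
    intro j h1 h2
    by_cases hcase : min a.1 b.1 ≤ j ∧ j ≤ max a.1 b.1
    · exact ih j hcase.1 hcase.2
    · have hj : j = c.1 := by
        rcases adj_fst hbc.2 with h | h | h <;> omega
      exact ⟨c, hbc.1, hj.symm⟩

private lemma rtg_cross {S : Set (ℕ × ℕ)} {a b : ℕ × ℕ} (ha : a ∈ S)
    (h : Relation.ReflTransGen (fun x y => y ∈ S ∧ Adj x y) a b) :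
    ∀ j, j + 1 ≤ a.1 → b.1 ≤ j → ∃ c : ℕ, (j, c) ∈ S ∧ (j + 1, c) ∈ S := by
  induction h with
  | refl => intro j h1 h2; omega
  | @tail b c hab hbc ih =>
    intro j h1 h2
    by_cases hcase : b.1 ≤ j
    · exact ih j h1 hcase
    · push_neg at hcase
      have hbS : b ∈ S := rtg_mem ha hab
      rcases hbc.2 with ⟨hh, _⟩ | ⟨hcol, hv | hv⟩
      · omega
      · omega
      · -- c.1 + 1 = b.1, b.2 = c.2
        have hb1 : b.1 = j + 1 := by omega
        have hc1 : c.1 = j := by omega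
        refine ⟨b.2, ?_, ?_⟩
        · have hcEq : (j, b.2) = c := by
            rw [Prod.ext_iff]; exact ⟨hc1.symm, hcol⟩
          rw [hcEq]; exact hbc.1
        · have hbEq : (j + 1, b.2) = b := by
            rw [Prod.ext_iff]; exact ⟨hb1.symm, rfl⟩
          rw [hbEq]; exact hbS

/-! #### Structure of a border strip -/

lemma exists_strip_data {mu nu : Partition} {n : ℕ} (hn : 0 < n)
    (hbs : IsBorderStrip mu nu n) :
    ∃ r s : ℕ, r ≤ s ∧
      (∀ j, j < r ∨ s < j → nu.parts j = mu.parts j) ∧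
      (∀ j, r ≤ j → j < s → nu.parts (j + 1) = mu.parts j + 1) ∧
      (∀ j, r ≤ j → j ≤ s → mu.parts j < nu.parts j) ∧
      ((nu.parts r : ℤ) - r = (mu.parts s : ℤ) - s + n) ∧
      (Prod.fst '' skew mu nu = Set.Icc r s) := by
  obtain ⟨hsub, hcard, hconn, h2x2⟩ := hbs
  set S := skew mu nu with hS
  have hmemS : ∀ j c : ℕ, (j, c) ∈ S ↔ mu.parts j ≤ c ∧ c < nu.parts j := by
    intro j c; exact mem_skew
  set R := {j : ℕ | mu.parts j < nu.parts j} with hR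
  have hRbox : ∀ j ∈ R, (j, mu.parts j) ∈ S := by
    intro j hj; rw [hmemS]; exact ⟨le_refl _, hj⟩
  have hboxR : ∀ c : ℕ × ℕ, c ∈ S → c.1 ∈ R := by
    intro c hc
    have := mem_skew.mp hc
    exact lt_of_le_of_lt this.1 this.2
  have hSne : S.Nonempty := by
    apply Set.nonempty_of_ncard_ne_zero; rw [hcard]; omega
  have hRne : R.Nonempty := by
    obtain ⟨c, hc⟩ := hSne
    exact ⟨c.1, hboxR c hc⟩
  have hRbdd : BddAbove R := by
    refine ⟨nu.length, fun j hj => ?_⟩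
    have : 0 < nu.parts j := by
      have : mu.parts j < nu.parts j := hj
      omega
    exact (nu.lt_length_iff.mpr this).le
  set r := sInf R with hr
  set s := sSup R with hs
  have hrR : r ∈ R := Nat.sInf_mem hRne
  have hsR : s ∈ R := Nat.sSup_mem hRne hRbdd
  have hrs : r ≤ s := Nat.sInf_le hsR
  have hrbox : (r, mu.parts r) ∈ S := hRbox r hrR
  have hsbox : (s, mu.parts s) ∈ S := hRbox s hsR
  have hicc : ∀ j, r ≤ j → j ≤ s → j ∈ R := by
    intro j h1 h2
    have hpath := hconn _ hsbox _ hrbox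
    obtain ⟨c, hc, hcj⟩ := rtg_interval hsbox hpath j (by simp; omega) (by simp; omega)
    exact hcj ▸ hboxR c hc
  have hRicc : ∀ j ∈ R, r ≤ j ∧ j ≤ s := fun j hj => ⟨Nat.sInf_le hj, le_csSup hRbdd hj⟩
  have hpos : ∀ j, r ≤ j → j ≤ s → mu.parts j < nu.parts j := fun j h1 h2 => hicc j h1 h2
  have houter : ∀ j, j < r ∨ s < j → nu.parts j = mu.parts j := by
    intro j hj
    have hnotR : j ∉ R := by
      intro hmem
      have := hRicc j hmem
      omega
    have h1 : ¬ mu.parts j < nu.parts j := hnotR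
    have h2 := hsub j
    omega
  have hstep : ∀ j, r ≤ j → j < s → nu.parts (j + 1) = mu.parts j + 1 := by
    intro j h1 h2
    have hj : j ∈ R := hicc j h1 (by omega)
    have hj1 : j + 1 ∈ R := hicc (j + 1) (by omega) (by omega)
    have ha : (j + 1, mu.parts (j + 1)) ∈ S := hRbox _ hj1
    have hb : (j, mu.parts j) ∈ S := hRbox _ hj
    obtain ⟨c, hc1, hc2⟩ :=
      rtg_cross ha (hconn _ ha _ hb) j (by simp) (by simp)
    obtain ⟨hmc, hcn⟩ := (hmemS _ _).1 hc1
    obtain ⟨hmc1, hcn1⟩ := (hmemS _ _).1 hc2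
    have hanti : nu.parts (j + 1) ≤ nu.parts j := nu.antitone (by omega)
    have hanti' : mu.parts (j + 1) ≤ mu.parts j := mu.antitone (by omega)
    have e1 : nu.parts (j + 1) = c + 1 := by
      by_contra h
      apply h2x2
      refine ⟨j, c, hc1, hc2, ?_, ?_⟩
      · rw [hmemS]; omega
      · rw [hmemS]; omega
    have e2 : mu.parts j = c := by
      by_contra h
      apply h2x2
      refine ⟨j, c - 1, ?_, ?_, ?_, ?_⟩
      · rw [hmemS]; omega
      · rw [hmemS]; omega
      · have hcc : c - 1 + 1 = c := by omega
        rw [hcc, hmemS]; omega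
      · have hcc : c - 1 + 1 = c := by omega
        rw [hcc, hmemS]; omega
    omega
  have hrows : Prod.fst '' S = Set.Icc r s := by
    ext j
    constructor
    · rintro ⟨c, hc, rfl⟩
      have := hRicc _ (hboxR c hc)
      exact Set.mem_Icc.mpr this
    · intro hj
      obtain ⟨h1, h2⟩ := Set.mem_Icc.mp hj
      exact ⟨(j, mu.parts j), hRbox j (hicc j h1 h2), rfl⟩
  -- size
  have hSF : S = ↑((Finset.Icc r s).biUnion
      (fun j => (Finset.Ico (mu.parts j) (nu.parts j)).image (fun c => (j, c)))) := by
    ext ⟨j, c⟩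
    simp only [Finset.coe_biUnion, Set.mem_iUnion, Finset.mem_coe, Finset.mem_Icc,
      Finset.mem_image, Finset.mem_Ico, Prod.mk.injEq]
    constructor
    · intro h
      have hjR := hboxR _ h
      have := hRicc _ hjR
      exact ⟨j, this, c, (hmemS _ _).1 h, rfl, rfl⟩
    · rintro ⟨j', _, c', hc', rfl, rfl⟩
      exact (hmemS _ _).2 hc'
  have hdisj : ∀ x ∈ Finset.Icc r s, ∀ y ∈ Finset.Icc r s, x ≠ y →
      Disjoint ((Finset.Ico (mu.parts x) (nu.parts x)).image (fun c => (x, c)))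
        ((Finset.Ico (mu.parts y) (nu.parts y)).image (fun c => (y, c))) := by
    intro x _ y _ hxy
    rw [Finset.disjoint_left]
    rintro ⟨j, c⟩ h1 h2
    simp only [Finset.mem_image, Prod.mk.injEq] at h1 h2
    obtain ⟨_, _, rfl, _⟩ := h1
    obtain ⟨_, _, rfl, _⟩ := h2
    exact hxy rfl
  have hcardF : n = ∑ j ∈ Finset.Icc r s, (nu.parts j - mu.parts j) := by
    rw [← hcard, hSF, Set.ncard_coe_finset, Finset.card_biUnion hdisj]
    refine Finset.sum_congr rfl fun j _ => ?_
    rw [Finset.card_image_of_injective _ (fun a b h => by simpa using congrArg Prod.snd h),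
      Nat.card_Ico]
  have htel : ∀ d : ℕ, r + d ≤ s →
      (∑ j ∈ Finset.Icc r (r + d), ((nu.parts j : ℤ) - mu.parts j))
        = (nu.parts r : ℤ) - mu.parts (r + d) + d := by
    intro d
    induction d with
    | zero => intro _; simp
    | succ d ih =>
      intro hd
      have h1 : r + (d + 1) = (r + d) + 1 := by omega
      rw [h1, Finset.sum_Icc_succ_top (by omega), ih (by omega),
        hstep (r + d) (by omega) (by omega)]
      push_cast
      ring
  have hsum : (n : ℤ) = ∑ j ∈ Finset.Icc r s, ((nu.parts j : ℤ) - mu.parts j) := by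
    rw [hcardF, Nat.cast_sum]
    refine Finset.sum_congr rfl fun j hj => ?_
    obtain ⟨h1, h2⟩ := Finset.mem_Icc.mp hj
    have := hpos j h1 h2
    push_cast [Nat.cast_sub this.le]
    ring
  have hsize : (nu.parts r : ℤ) - r = (mu.parts s : ℤ) - s + n := by
    have h1 := htel (s - r) (by omega)
    have h2 : r + (s - r) = s := by omega
    rw [h2] at h1
    rw [hsum] at *
    have hc : ((s - r : ℕ) : ℤ) = (s : ℤ) - r := by push_cast [Nat.cast_sub hrs]; ring
    omega
  exact ⟨r, s, hrs, houter, hstep, hpos, hsize, hrows⟩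

lemma spin_eq_of_rows {mu nu : Partition} {r s : ℕ} (hrs : r ≤ s)
    (hrows : Prod.fst '' skew mu nu = Set.Icc r s) :
    spin (skew mu nu) = s - r := by
  rw [spin, hrows, ← Finset.coe_Icc, Set.ncard_coe_finset, Nat.card_Icc]
  omega

lemma startBox_eq {mu nu : Partition} {r s : ℕ} {b : ℕ × ℕ}
    (hpos : ∀ j, r ≤ j → j ≤ s → mu.parts j < nu.parts j)
    (hrows : Prod.fst '' skew mu nu = Set.Icc r s) (hrs : r ≤ s)
    (hb : IsStartBox (skew mu nu) b) : b = (r, nu.parts r - 1) := by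
  obtain ⟨hbS, hmin, hmax⟩ := hb
  have hbox : (r, nu.parts r - 1) ∈ skew mu nu := by
    rw [mem_skew]
    have := hpos r le_rfl hrs
    constructor <;> simp <;> omega
  have hb1 : b.1 = r := by
    have h1 : b.1 ∈ Set.Icc r s := hrows ▸ ⟨b, hbS, rfl⟩
    have h2 := hmin _ hbox
    simp only [Set.mem_Icc] at h1
    omega
  have hb2 : b.2 = nu.parts r - 1 := by
    have h1 := hmax _ hbox (by simp [hb1])
    have h2 : b.2 < nu.parts b.1 := (mem_skew.mp hbS).2
    rw [hb1] at h2
    simp at h1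
    omega
  exact Prod.ext hb1 hb2

/-! #### Chain plumbing -/

lemma Partition.cells_mono_s9 {p q : Partition} (h : p.Sub q) : p.cells ⊆ q.cells :=
  fun c hc => lt_of_lt_of_le hc (h c.1)

lemma Partition.sub_trans {p q t : Partition} (h1 : p.Sub q) (h2 : q.Sub t) : p.Sub t :=
  fun i => (h1 i).trans (h2 i)

lemma Partition.sub_refl (p : Partition) : p.Sub p := fun _ => le_rfl

lemma chain_sub {n : ℕ} {mu lam : Partition} {τ : List ℕ} {α : ℕ → Partition}
    (hc : IsChain n mu lam τ α) :
    ∀ i j, i ≤ j → j ≤ τ.length → (α i).Sub (α j) := by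
  intro i j hij hj
  obtain ⟨d, rfl⟩ : ∃ d, j = i + d := ⟨j - i, by omega⟩
  clear hij
  induction d with
  | zero => exact (α i).sub_refl
  | succ d ih =>
    have h1 : i + d < τ.length := by omega
    have h2 := (hc.2.2 ⟨i + d, h1⟩).1
    exact Partition.sub_trans (ih (by omega)) h2

/-! #### The "no bead at `a` in `λ`" lemma (uses horizontality) -/

lemma no_bead_at_a {n k : ℕ} (hn : 0 < n) {mu lam : Partition} {α : ℕ → Partition}
    (hc : IsChain n mu lam (List.replicate k 1) α)
    (hh : ∀ i : Fin (List.replicate k 1).length,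
      ∃ b, IsStartBox (skew (α i) (α (i + 1))) b ∧ b ∈ up (skew mu lam))
    {a : ℤ} {s : ℕ} (ha : a = (mu.parts s : ℤ) - s)
    (I1 : ∀ j : ℕ, ((α 1).parts j : ℤ) - j ≠ a)
    (I2 : a < ((α 1).parts s : ℤ) - s) (hk : 1 ≤ k) :
    ∀ j : ℕ, (lam.parts j : ℤ) - j ≠ a := by
  have hlen : (List.replicate k 1).length = k := by simp
  have hP : ∀ t : ℕ, 1 ≤ t → t ≤ k → ∀ j : ℕ, ((α t).parts j : ℤ) - j ≠ a := by
    intro t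
    induction t with
    | zero => omega
    | succ t ih =>
      intro _ htk
      rcases Nat.eq_or_lt_of_le (show 1 ≤ t + 1 from by omega) with h1 | h1
      · rw [← h1]; exact I1
      · -- t ≥ 1
        have ht1 : 1 ≤ t := by omega
        have htk' : t ≤ k := by omega
        have Pt := ih ht1 (by omega)
        have htlt : t < (List.replicate k 1).length := by omega
        have hstrip : IsBorderStrip (α t) (α (t + 1)) n := by
          have := hc.2.2 ⟨t, htlt⟩
          simpa using this
        obtain ⟨r', s', hrs', houter, hstep, hpos, hsize, hrows⟩ :=
          exists_strip_data hn hstrip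
        intro j hj
        -- show j = r'
        have hjr' : j = r' := by
          by_contra hne
          rcases Nat.lt_or_ge j r' with h | h
          · exact Pt j (by rw [← houter j (Or.inl h)]; exact hj)
          · rcases Nat.lt_or_ge s' j with h2 | h2
            · exact Pt j (by rw [← houter j (Or.inr h2)]; exact hj)
            · -- r' ≤ j ≤ s', j ≠ r' so r' < j
              have h3 : r' ≤ j - 1 := by omega
              have h4 : j - 1 < s' := by omega
              have h5 := hstep (j - 1) h3 h4
              have h6 : j - 1 + 1 = j := by omega
              rw [h6] at h5
              apply Pt (j - 1)
              rw [← hj, h5]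
              push_cast
              have : (j : ℤ) - 1 = ((j - 1 : ℕ) : ℤ) := by push_cast [Nat.cast_sub (by omega : 1 ≤ j)]; ring
              omega
        rw [hjr'] at hj
        -- a = value of nu at r', with nu = α (t+1)
        -- I2 at level t+1
        have hsub1t : (α 1).Sub (α (t + 1)) := by
          have := chain_sub hc 1 (t + 1) (by omega) (by omega)
          exact this
        have hI2t : a < ((α (t + 1)).parts s : ℤ) - s := by
          have := hsub1t s
          have : ((α 1).parts s : ℤ) ≤ (α (t + 1)).parts s := Int.ofNat_le.mpr this
          omega
        -- j = r' > s
        have hrgt : s < r' := by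
          by_contra h
          push_neg at h
          rcases Nat.eq_or_lt_of_le h with h' | h'
          · rw [h'] at hj; omega
          · have := (α (t + 1)).beta_strictAnti h'
            omega
        -- start box
        obtain ⟨b, hbstart, hbup⟩ := hh ⟨t, htlt⟩
        have hbeq : b = (r', (α (t + 1)).parts r' - 1) := by
          have : ((⟨t, htlt⟩ : Fin (List.replicate k 1).length) : ℕ) = t := rfl
          rw [this] at hbstart
          exact startBox_eq hpos hrows hrs' hbstart
        subst hbeq
        obtain ⟨hbmem, hbabove⟩ := hbup
        have hnur' : 0 < (α (t + 1)).parts r' := by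
          have := hpos r' le_rfl hrs'
          omega
        have hnot := hbabove (r' - 1) (by simp; omega)
        rw [mem_skew] at hnot
        push_neg at hnot
        simp only at hnot
        -- hnot : mu.parts (r'-1) ≤ nu_r' - 1 → ¬ (nu_r' - 1 < lam.parts (r'-1))
        rcases Nat.lt_or_ge ((α (t + 1)).parts r' - 1) (mu.parts (r' - 1)) with hcase | hcase
        · -- mu bead at r'-1 exceeds a: contradiction with r' > s
          have hval : ((α (t + 1)).parts r' : ℤ) - r' = a := hj
          have hmb : a < (mu.parts (r' - 1) : ℤ) - ((r' - 1 : ℕ) : ℤ) := by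
            have h1 : ((α (t + 1)).parts r' : ℤ) ≤ (mu.parts (r' - 1) : ℤ) := by
              exact_mod_cast (by omega : (α (t + 1)).parts r' ≤ mu.parts (r' - 1))
            have h2 : ((r' - 1 : ℕ) : ℤ) = (r' : ℤ) - 1 := by
              push_cast [Nat.cast_sub (by omega : 1 ≤ r')]; ring
            omega
          rcases Nat.eq_or_lt_of_le (show s ≤ r' - 1 from by omega) with he | he
          · rw [← he] at hmb; omega
          · have := mu.beta_strictAnti he
            omega
        · have hlam := hnot hcase
          -- lam.parts (r'-1) ≤ nu_r' - 1 < nu_{r'-1} ≤ lam.parts (r'-1) contradiction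
          have hsubtl : (α (t + 1)).Sub lam := by
            have h1 := chain_sub hc (t + 1) k (by omega) (by omega)
            have h2 : α (List.replicate k 1).length = lam := hc.2.1
            rw [hlen] at h2
            rwa [h2] at h1
          have h1 : (α (t + 1)).parts (r' - 1) ≤ lam.parts (r' - 1) := hsubtl _
          have h2 : (α (t + 1)).parts r' ≤ (α (t + 1)).parts (r' - 1) :=
            (α (t + 1)).antitone (by omega)
          omega
  have h2 : α (List.replicate k 1).length = lam := hc.2.1
  rw [hlen] at h2
  have := hP k hk le_rfl
  rwa [h2] at this

/-! #### Determinant lemmas -/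

lemma det_Mmat_self (n : ℕ) (lam : Partition) (l : ℕ) :
    (Mmat n lam lam l).det = 1 := by
  have htri : (Mmat n lam lam l).BlockTriangular id := by
    intro i j hij
    simp only [Mmat, Matrix.of_apply]
    rw [if_neg]
    rintro ⟨h1, -⟩
    have hlt : (j : ℕ) < (i : ℕ) := hij
    have := lam.beta_strictAnti hlt
    omega
  rw [Matrix.det_of_upperTriangular htri]
  apply Finset.prod_eq_one
  intro i _
  simp only [Mmat, Matrix.of_apply]
  rw [if_pos ⟨le_rfl, by simp⟩]

lemma Mmat_congr_col {n l : ℕ} {p q lam : Partition} (i j j' : Fin l)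
    (h : (p.parts j : ℤ) - (j : ℤ) = (q.parts j' : ℤ) - (j' : ℤ)) :
    Mmat n p lam l i j = Mmat n q lam l i j' := by
  simp only [Mmat, Matrix.of_apply]
  rw [h]

lemma Mmat_congr_col_shift {n l : ℕ} (hn : 0 < n) {p q lam : Partition} (i j j' : Fin l)
    (h : (q.parts j' : ℤ) - (j' : ℤ) = (p.parts j : ℤ) - (j : ℤ) + n)
    (hnoa : (lam.parts i : ℤ) - (i : ℤ) ≠ (p.parts j : ℤ) - (j : ℤ)) :
    Mmat n p lam l i j = Mmat n q lam l i j' := by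
  simp only [Mmat, Matrix.of_apply]
  rw [h]
  apply if_congr _ rfl rfl
  constructor
  · rintro ⟨h1, h2⟩
    constructor
    · have hba : (lam.parts i : ℤ) - (i : ℤ) - ((p.parts j : ℤ) - (j : ℤ)) ≠ 0 := by
        intro h0; apply hnoa; omega
      have hle := Int.le_of_dvd (by omega) h2
      omega
    · have he : (lam.parts i : ℤ) - (i : ℤ) - ((p.parts j : ℤ) - (j : ℤ) + n)
          = ((lam.parts i : ℤ) - (i : ℤ) - ((p.parts j : ℤ) - (j : ℤ))) - n := by ring
      rw [he]
      exact dvd_sub h2 dvd_rfl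
  · rintro ⟨h1, h2⟩
    have he : (lam.parts i : ℤ) - (i : ℤ) - ((p.parts j : ℤ) - (j : ℤ))
        = ((lam.parts i : ℤ) - (i : ℤ) - ((p.parts j : ℤ) - (j : ℤ) + n)) + n := by ring
    constructor
    · have hn0 : (0:ℤ) ≤ (n:ℤ) := by positivity
      omega
    · rw [he]; exact dvd_add h2 dvd_rfl

lemma det_Mmat_step {n : ℕ} (hn : 0 < n) {mu nu lam : Partition} {l r s : ℕ}
    (hrs : r ≤ s) (hsl : s < l)
    (houter : ∀ j, j < r ∨ s < j → nu.parts j = mu.parts j)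
    (hstep : ∀ j, r ≤ j → j < s → nu.parts (j + 1) = mu.parts j + 1)
    (hsize : (nu.parts r : ℤ) - r = (mu.parts s : ℤ) - s + n)
    (hnoa : ∀ i : ℕ, (lam.parts i : ℤ) - i ≠ (mu.parts s : ℤ) - s) :
    (Mmat n mu lam l).det = (-1 : ℤ) ^ (s - r) * (Mmat n nu lam l).det := by
  obtain ⟨m, rfl⟩ : ∃ m, l = m + 1 := ⟨l - 1, by omega⟩
  set rl : Fin (m + 1) := ⟨r, by omega⟩ with hrl
  set dl : Fin (m + 1) := ⟨s - r, by omega⟩ with hdl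
  set σ : Equiv.Perm (Fin (m + 1)) :=
    Equiv.addLeft rl * Fin.cycleRange dl * (Equiv.addLeft rl)⁻¹ with hσdef
  have happ : ∀ j : Fin (m + 1), σ j = rl + Fin.cycleRange dl (-rl + j) := by
    intro j
    simp only [hσdef, Equiv.Perm.mul_apply, Equiv.Perm.inv_def, Equiv.addLeft_symm,
      Equiv.coe_addLeft]
  have hxval : ∀ j : Fin (m + 1), ((-rl + j : Fin (m + 1)) : ℕ)
      = (m + 1 - r + (j : ℕ)) % (m + 1) := by
    intro j
    rw [Fin.val_add, Fin.neg_def]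
    simp only [hrl]
    rw [Nat.mod_add_mod]
  -- the three val computations
  have hval1 : ∀ j : Fin (m + 1), (j : ℕ) < r → ((σ j : Fin (m + 1)) : ℕ) = (j : ℕ) := by
    intro j h1
    have hx : ((-rl + j : Fin (m + 1)) : ℕ) = m + 1 - r + (j : ℕ) := by
      rw [hxval, Nat.mod_eq_of_lt (by omega)]
    have hgt : dl < (-rl + j) := by
      rw [Fin.lt_def, hx]
      exact (by omega : s - r < m + 1 - r + (j : ℕ))
    rw [happ, Fin.cycleRange_of_gt hgt, Fin.val_add, hx]
    have h2 : (rl : ℕ) + (m + 1 - r + (j : ℕ)) = (m + 1) + (j : ℕ) := by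
      simp only [hrl]; omega
    rw [h2, Nat.add_mod_left, Nat.mod_eq_of_lt j.isLt]
  have hxge : ∀ j : Fin (m + 1), r ≤ (j : ℕ) →
      ((-rl + j : Fin (m + 1)) : ℕ) = (j : ℕ) - r := by
    intro j h1
    rw [hxval]
    have h2 : m + 1 - r + (j : ℕ) = (m + 1) + ((j : ℕ) - r) := by omega
    rw [h2, Nat.add_mod_left, Nat.mod_eq_of_lt (by omega)]
  have hval2 : ∀ j : Fin (m + 1), s < (j : ℕ) → ((σ j : Fin (m + 1)) : ℕ) = (j : ℕ) := by
    intro j h1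
    have hx := hxge j (by omega)
    have hgt : dl < (-rl + j) := by
      rw [Fin.lt_def, hx]
      exact (by omega : s - r < (j : ℕ) - r)
    rw [happ, Fin.cycleRange_of_gt hgt, Fin.val_add, hx]
    have h2 : (rl : ℕ) + ((j : ℕ) - r) = (j : ℕ) := by simp only [hrl]; omega
    rw [h2, Nat.mod_eq_of_lt j.isLt]
  have hval3 : ∀ j : Fin (m + 1), (j : ℕ) = s → ((σ j : Fin (m + 1)) : ℕ) = r := by
    intro j h1
    have hx : (-rl + j) = dl := by
      apply Fin.ext
      rw [hxge j (by omega), h1]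
    rw [happ, hx, Fin.cycleRange_self, Fin.val_add]
    simp only [Fin.val_zero, Nat.add_zero, hrl]
    exact Nat.mod_eq_of_lt (by omega)
  have hval4 : ∀ j : Fin (m + 1), r ≤ (j : ℕ) → (j : ℕ) < s →
      ((σ j : Fin (m + 1)) : ℕ) = (j : ℕ) + 1 := by
    intro j h1 h2
    have hx := hxge j h1
    have hlt : (-rl + j) < dl := by
      rw [Fin.lt_def, hx]
      exact (by omega : (j : ℕ) - r < s - r)
    rw [happ, Fin.val_add, Fin.coe_cycleRange_of_lt hlt, hx]
    have h3 : (rl : ℕ) + ((j : ℕ) - r + 1) = (j : ℕ) + 1 := by simp only [hrl]; omega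
    rw [h3, Nat.mod_eq_of_lt (by omega)]
  -- matrix identity
  have hM : Mmat n mu lam (m + 1) = (Mmat n nu lam (m + 1)).submatrix id σ := by
    ext i j
    rw [Matrix.submatrix_apply]
    show Mmat n mu lam (m + 1) i j = Mmat n nu lam (m + 1) i (σ j)
    rcases Nat.lt_or_ge (j : ℕ) r with hc1 | hc1
    · apply Mmat_congr_col
      have hv := hval1 j hc1
      rw [hv, houter _ (Or.inl hc1)]
    · rcases Nat.lt_or_ge s (j : ℕ) with hc2 | hc2
      · apply Mmat_congr_col
        have hv := hval2 j hc2
        rw [hv, houter _ (Or.inr hc2)]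
      · rcases Nat.eq_or_lt_of_le hc2 with hc3 | hc3
        · -- j = s
          apply Mmat_congr_col_shift hn
          · have hv := hval3 j hc3
            rw [hv]
            have hj : (j : ℕ) = s := hc3
            rw [hj]
            exact hsize
          · have hj : (j : ℕ) = s := hc3
            rw [hj]
            exact hnoa i
        · apply Mmat_congr_col
          have hv := hval4 j hc1 hc3
          rw [hv, hstep _ hc1 hc3]
          push_cast
          ring
  have hsign : Equiv.Perm.sign σ = (-1 : ℤˣ) ^ (s - r) := by
    rw [hσdef]
    rw [map_mul, map_mul, map_inv]
    rw [mul_comm (Equiv.Perm.sign (Equiv.addLeft rl)) _, mul_assoc, mul_inv_cancel, mul_one]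
    rw [Fin.sign_cycleRange]
  rw [hM, Matrix.det_permute', hsign]
  norm_num

/-! #### Main induction -/

lemma det_M_chain (n : ℕ) (hn : 0 < n) (lam : Partition) :
    ∀ k (mu : Partition) (α : ℕ → Partition),
      IsHorizontalChain n mu lam (List.replicate k 1) α →
      (Mmat n mu lam lam.length).det = chainSign α k := by
  intro k
  induction k with
  | zero =>
    intro mu α hch
    have h0 : α 0 = mu := hch.1.1
    have h1 : α 0 = lam := by
      have := hch.1.2.1
      simpa using this
    have hml : mu = lam := h0 ▸ h1
    rw [hml, chainSign]
    simp [det_Mmat_self]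
  | succ k ih =>
    intro mu α hch
    obtain ⟨hc, hh⟩ := hch
    have h0 : α 0 = mu := hc.1
    have hlam : α (k + 1) = lam := by
      have := hc.2.1
      simpa using this
    have hstrip0 : IsBorderStrip mu (α 1) n := by
      have := hc.2.2 ⟨0, by simp⟩
      simpa [h0] using this
    obtain ⟨r, s, hrs, houter, hstep, hpos, hsize, hrows⟩ := exists_strip_data hn hstrip0
    have hsub1lam : (α 1).Sub lam := by
      have := chain_sub hc 1 (k + 1) (by omega) (by simp)
      rwa [hlam] at this
    have hsl : s < lam.length := by
      have h1 : 0 < (α 1).parts s := by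
        have := hpos s hrs le_rfl
        omega
      have h2 : s < (α 1).length := (α 1).lt_length_iff.mpr h1
      exact lt_of_lt_of_le h2 (Partition.length_le_of_sub hsub1lam)
    -- no bead at a in lam
    have I1 : ∀ j : ℕ, ((α 1).parts j : ℤ) - j ≠ (mu.parts s : ℤ) - s := by
      intro j hj
      rcases Nat.lt_or_ge j r with h1 | h1
      · rw [houter j (Or.inl h1)] at hj
        rcases Nat.eq_or_lt_of_le (show j ≤ s from by omega) with he | he
        · subst he; omega
        · have := mu.beta_strictAnti he; omega
      · rcases Nat.lt_or_ge s j with h2 | h2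
        · rw [houter j (Or.inr h2)] at hj
          have := mu.beta_strictAnti h2; omega
        · rcases Nat.eq_or_lt_of_le h1 with he | he
          · rw [← he] at hj; omega
          · have h3 : r ≤ j - 1 := by omega
            have h4 : j - 1 < s := by omega
            have h5 := hstep (j - 1) h3 h4
            have h6 : j - 1 + 1 = j := by omega
            rw [h6] at h5
            rw [h5] at hj
            rcases Nat.eq_or_lt_of_le (show j - 1 ≤ s from by omega) with he2 | he2
            · omega
            · have := mu.beta_strictAnti he2
              have hcast : ((j - 1 : ℕ) : ℤ) = (j : ℤ) - 1 := by
                push_cast [Nat.cast_sub (show 1 ≤ j from by omega)]; ring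
              push_cast at hj
              omega
    have I2 : (mu.parts s : ℤ) - s < ((α 1).parts s : ℤ) - s := by
      have h1 := hpos s hrs le_rfl
      have : (mu.parts s : ℤ) < (α 1).parts s := by exact_mod_cast h1
      omega
    have hnoa : ∀ j : ℕ, (lam.parts j : ℤ) - j ≠ (mu.parts s : ℤ) - s :=
      no_bead_at_a hn hc hh rfl I1 I2 (by omega)
    have hdet := det_Mmat_step hn hrs hsl houter hstep hsize hnoa
    -- tail chain
    have hsubmu1 : mu.Sub (α 1) := hstrip0.1
    have htail : IsHorizontalChain n (α 1) lam (List.replicate k 1) (fun i => α (i + 1)) := by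
      refine ⟨⟨rfl, ?_, ?_⟩, ?_⟩
      · simpa using hlam
      · intro i
        have hik : (i : ℕ) < k := by simpa using i.isLt
        have hi : (i : ℕ) + 1 < (List.replicate (k + 1) 1).length := by
          simp; omega
        have := hc.2.2 ⟨(i : ℕ) + 1, hi⟩
        simpa using this
      · intro i
        have hik : (i : ℕ) < k := by simpa using i.isLt
        have hi : (i : ℕ) + 1 < (List.replicate (k + 1) 1).length := by
          simp; omega
        obtain ⟨b, hb1, hb2⟩ := hh ⟨(i : ℕ) + 1, hi⟩
        refine ⟨b, hb1, ?_⟩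
        obtain ⟨hbmem, hbabove⟩ := hb2
        have hblen : (i : ℕ) + 1 + 1 ≤ (List.replicate (k + 1) 1).length := by
          simp
          omega
        have hsub1i : (α 1).Sub (α ((i : ℕ) + 1)) :=
          chain_sub hc 1 ((i : ℕ) + 1) (by omega) (by simp; omega)
        have hbS : b ∈ skew (α ((i : ℕ) + 1)) (α ((i : ℕ) + 1 + 1)) := hb1.1
        have hsubi2lam : (α ((i : ℕ) + 1 + 1)).Sub lam := by
          have := chain_sub hc ((i : ℕ) + 1 + 1) (k + 1) (by omega) (by simp)
          rwa [hlam] at this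
        constructor
        · -- b ∈ skew (α 1) lam
          constructor
          · exact Partition.cells_mono_s9 hsubi2lam hbS.1
          · intro hmem
            exact hbS.2 (Partition.cells_mono_s9 hsub1i hmem)
        · intro rr hrr hmem
          apply hbabove rr hrr
          exact ⟨hmem.1, fun hmu => hmem.2 (Partition.cells_mono_s9 hsubmu1 hmu)⟩
    have ihr := ih (α 1) (fun i => α (i + 1)) htail
    have hspin : spin (skew mu (α 1)) = s - r := spin_eq_of_rows hrs hrows
    rw [hdet, ihr]
    rw [chainSign, chainSign, Finset.prod_range_succ']
    rw [h0, hspin]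
    ring

end Aux

end Pleth

open Pleth
/-- Theorem 3.5: for any horizontal `n`-border strip chain of weight
`(1, …, 1)` (`k` ones) from `μ` to `λ`, `det M(λ/μ)` equals the sign of the
chain. In particular this sign is independent of the chosen horizontal chain. -/
theorem det_M_of_horizontal (n k : ℕ) (hn : 0 < n) (hk : 0 < k)
    (mu lam : Partition) (hsub : mu.Sub lam) (α : ℕ → Partition)
    (hchain : IsHorizontalChain n mu lam (List.replicate k 1) α) :
    Matrix.det (Mmat n mu lam lam.length) = chainSign α k :=
  det_M_chain n hn lam k mu α hchain
end
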